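/- arXiv:2404.12826 — 9 statements merged into one kernel-verified Lean document; each statement's English description precedes it below -/
import Mathlib

section
/- Let 𝔄 be a unital C*-algebra, p ∈ 𝔄 a projection and q ∈ 𝔄 an idempotent. Then q* = (2p−1)q(2p−1) if and only if |q*| = (2p−1)|q|(2p−1), where |q| is the positive square root of q*q and |q*| is the positive square root of qq*. -/
/-- For a projection `p` and an idempotent `q` in a unital C*-algebra,
`q* = (2p-1)q(2p-1)` iff `|q*| = (2p-1)|q|(2p-1)`, where `|a| = CFC.sqrt (star a * a)`
is the positive square root of `a*a`. -/
theorem quasiProjectionPair_iff_abs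
    {A : Type*} [CStarAlgebra A] [PartialOrder A] [StarOrderedRing A] (p q : A)
    (hp_star : star p = p) (hp_idem : p * p = p) (hq_idem : q * q = q) :
    star q = (2 * p - 1) * q * (2 * p - 1) ↔
    CFC.sqrt (q * star q) = (2 * p - 1) * CFC.sqrt (star q * q) * (2 * p - 1) := by
  obtain ⟨u, hu_def, hu_star, hu_sq⟩ :
      ∃ u : A, u = 2 * p - 1 ∧ star u = u ∧ u * u = 1 := by
    refine ⟨2 * p - 1, rfl, ?_, ?_⟩
    · have h1 : star (2 * p - 1 : A) = star p * 2 - 1 := by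
        rw [star_sub, star_one, star_mul]
        congr 1
        rw [star_ofNat]
      rw [h1, hp_star]
      noncomm_ring
    · have h4 : (2 * p - 1 : A) * (2 * p - 1) = 4 * (p * p) - 4 * p + 1 := by
        noncomm_ring
      rw [h4, hp_idem]; noncomm_ring
  rw [← hu_def]
  have ha_nonneg : (0 : A) ≤ star q * q := star_mul_self_nonneg q
  have hb_nonneg : (0 : A) ≤ q * star q := mul_star_self_nonneg q
  have hsa_nonneg : (0 : A) ≤ CFC.sqrt (star q * q) := CFC.sqrt_nonneg _
  have hsa_sq : CFC.sqrt (star q * q) * CFC.sqrt (star q * q) = star q * q :=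
    CFC.sqrt_mul_sqrt_self _ ha_nonneg
  -- conjugation by u twice is the identity
  have conj2 : ∀ x : A, u * (u * x * u) * u = x := by
    intro x
    have e : u * (u * x * u) * u = (u * u) * x * (u * u) := by noncomm_ring
    rw [e, hu_sq, one_mul, mul_one]
  -- conjugation multiplied: (u x u)(u y u) = u (x y) u
  have conjmul : ∀ x y : A, (u * x * u) * (u * y * u) = u * (x * y) * u := by
    intro x y
    have e : (u * x * u) * (u * y * u) = u * (x * ((u * u) * y)) * u := by noncomm_ring
    rw [e, hu_sq, one_mul]
  constructor
  · intro h
    -- forward: uniqueness of the positive square root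
    have hq' : u * star q * u = q := by
      rw [h]; exact conj2 q
    refine CFC.sqrt_unique ?_ ?_
    · calc (u * CFC.sqrt (star q * q) * u) * (u * CFC.sqrt (star q * q) * u)
          = u * (CFC.sqrt (star q * q) * CFC.sqrt (star q * q)) * u := conjmul _ _
        _ = u * (star q * q) * u := by rw [hsa_sq]
        _ = (u * star q * u) * (u * q * u) := (conjmul _ _).symm
        _ = q * star q := by rw [hq', ← h]
    · have := star_left_conjugate_nonneg hsa_nonneg u
      rwa [hu_star] at this
  · intro h
    -- backward: squared hypothesis gives  q * star q = u * (star q * q) * u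
    have hkey : q * star q = u * (star q * q) * u := by
      calc q * star q
          = CFC.sqrt (q * star q) * CFC.sqrt (q * star q) :=
            (CFC.sqrt_mul_sqrt_self _ hb_nonneg).symm
        _ = (u * CFC.sqrt (star q * q) * u) * (u * CFC.sqrt (star q * q) * u) := by rw [h]
        _ = u * (CFC.sqrt (star q * q) * CFC.sqrt (star q * q)) * u := conjmul _ _
        _ = u * (star q * q) * u := by rw [hsa_sq]
    -- r := u q u is an idempotent with star r * r = q * star q and r * star r = star q * q
    obtain ⟨r, hr_def⟩ : ∃ r : A, r = u * q * u := ⟨_, rfl⟩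
    have hr_star : star r = u * star q * u := by
      rw [hr_def, star_mul, star_mul, hu_star, mul_assoc]
    have hr_idem : r * r = r := by
      rw [hr_def, conjmul, hq_idem]
    have hrs_idem : star r * star r = star r := by
      rw [← star_mul, hr_idem]
    have hrsr : star r * r = q * star q := by
      rw [hr_star, hr_def, conjmul, ← hkey]
    have hrrs : r * star r = star q * q := by
      rw [hr_star, hr_def, conjmul, hkey, conj2]
    -- d := q - star r satisfies (star q * q) * d = 0 and d * (q * star q) = 0
    have had : (star q * q) * (q - star r) = 0 := by
      have h1 : (star q * q) * q = star q * q := by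
        rw [mul_assoc, hq_idem]
      have h2 : (star q * q) * star r = star q * q := by
        calc (star q * q) * star r = r * (star r * star r) := by
              rw [← hrrs, mul_assoc]
          _ = r * star r := by rw [hrs_idem]
          _ = star q * q := hrrs
      rw [mul_sub, h1, h2, sub_self]
    have hdb : (q - star r) * (q * star q) = 0 := by
      have h1 : q * (q * star q) = q * star q := by
        rw [← mul_assoc, hq_idem]
      have h2 : star r * (q * star q) = q * star q := by
        calc star r * (q * star q) = (star r * star r) * r := by
              rw [← hrsr, mul_assoc]
          _ = star r * r := by rw [hrs_idem]
          _ = q * star q := hrsr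
      rw [sub_mul, h1, h2, sub_self]
    -- hence (q - star r) * q = 0 and star r * (q - star r) = 0
    have hdq : (q - star r) * q = 0 := by
      have e : ((q - star r) * q) * star ((q - star r) * q) = 0 := by
        calc ((q - star r) * q) * star ((q - star r) * q)
            = ((q - star r) * (q * star q)) * star (q - star r) := by
              rw [star_mul]; noncomm_ring
          _ = 0 := by rw [hdb, zero_mul]
      exact (CStarRing.mul_star_self_eq_zero_iff _).mp e
    have hrd : star r * (q - star r) = 0 := by
      have e : star (star r * (q - star r)) * (star r * (q - star r)) = 0 := by
        calc star (star r * (q - star r)) * (star r * (q - star r))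
            = star (q - star r) * ((r * star r) * (q - star r)) := by
              rw [star_mul, star_star]; noncomm_ring
          _ = star (q - star r) * ((star q * q) * (q - star r)) := by rw [hrrs]
          _ = 0 := by rw [had, mul_zero]
      exact (CStarRing.star_mul_self_eq_zero_iff _).mp e
    -- combine: q = star r * q = star r
    have h1 : q = star r * q := by
      have e : q * q - star r * q = 0 := by
        rw [← sub_mul]; exact hdq
      rw [hq_idem] at e
      exact (sub_eq_zero.mp e)
    have h2 : star r * q = star r := by
      have e : star r * q - star r * star r = 0 := by
        rw [← mul_sub]; exact hrd
      rw [hrs_idem] at e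
      exact sub_eq_zero.mp e
    have hq_eq : q = star r := h1.trans h2
    calc star q = star (star r) := by rw [← hq_eq]
      _ = r := star_star r
      _ = u * q * u := hr_def
end

section
/- Let 𝔄 be a unital C*-algebra and (p,q) a quasi-projection pair in 𝔄. Put t₁ = p(1−q) and t₂ = (1−p)q. Then for all i,j ∈ {1,2}, |tᵢ|·|tⱼ*|² = |tᵢ|²·|tⱼ*|, where |a| denotes the positive square root of a*a and |a*| the positive square root of aa*. -/
section Aux

variable {A : Type*} [CStarAlgebra A] [PartialOrder A] [StarOrderedRing A]

private lemma aux_sqrt_mul_left {a x : A} (ha : 0 ≤ a) (h : a * x = 0) :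
    CFC.sqrt a * x = 0 := by
  have hs : IsSelfAdjoint (CFC.sqrt a) := .of_nonneg (CFC.sqrt_nonneg _)
  rw [← CStarRing.star_mul_self_eq_zero_iff]
  calc star (CFC.sqrt a * x) * (CFC.sqrt a * x)
      = star x * (CFC.sqrt a * CFC.sqrt a) * x := by
        rw [star_mul, hs.star_eq]; noncomm_ring
    _ = star x * a * x := by rw [CFC.sqrt_mul_sqrt_self a ha]
    _ = 0 := by rw [mul_assoc, h, mul_zero]

private lemma aux_sqrt_mul_right {a x : A} (ha : 0 ≤ a) (h : x * a = 0) :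
    x * CFC.sqrt a = 0 := by
  have hsa : IsSelfAdjoint a := .of_nonneg ha
  have h' : a * star x = 0 := by
    calc a * star x = star (x * a) := by rw [star_mul, hsa.star_eq]
    _ = 0 := by rw [h, star_zero]
  have h2 := aux_sqrt_mul_left ha h'
  have hs : IsSelfAdjoint (CFC.sqrt a) := .of_nonneg (CFC.sqrt_nonneg _)
  calc x * CFC.sqrt a = star (CFC.sqrt a * star x) := by
        rw [star_mul, star_star, hs.star_eq]
    _ = 0 := by rw [h2, star_zero]

private lemma aux_mul_nonneg_of_commute {x y : A} (hx : 0 ≤ x) (hy : 0 ≤ y)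
    (h : x * y = y * x) : 0 ≤ x * y := by
  have hxs : IsSelfAdjoint x := .of_nonneg hx
  have hys : IsSelfAdjoint y := .of_nonneg hy
  have hsa : IsSelfAdjoint (x * y) := by
    rw [IsSelfAdjoint, star_mul, hxs.star_eq, hys.star_eq, h]
  rw [nonneg_iff_isSelfAdjoint_and_quasispectrumRestricts, quasispectrumRestricts_iff_spectrumRestricts]
  refine ⟨hsa, SpectrumRestricts.nnreal_iff.mpr fun z hz ↦ ?_⟩
  rcases eq_or_ne z 0 with rfl | hz0
  · exact le_rfl
  · have hx2 : CFC.sqrt x * CFC.sqrt x = x := CFC.sqrt_mul_sqrt_self x hx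
    have hz1 : z ∈ spectrum ℝ (CFC.sqrt x * ((CFC.sqrt x * y))) \ {0} := by
      rw [← mul_assoc, hx2]; exact ⟨hz, hz0⟩
    rw [spectrum.nonzero_mul_comm] at hz1
    have hpos : 0 ≤ (CFC.sqrt x * y) * CFC.sqrt x := by
      have hs : IsSelfAdjoint (CFC.sqrt x) := .of_nonneg (CFC.sqrt_nonneg _)
      have := star_left_conjugate_nonneg hy (CFC.sqrt x)
      rwa [hs.star_eq] at this
    exact spectrum_nonneg_of_nonneg hpos hz1.1

private lemma aux_sqrt_comm {a b : A} (ha : 0 ≤ a) (hb : 0 ≤ b)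
    (h : a * b ^ 2 = a ^ 2 * b) : CFC.sqrt a * b = a * CFC.sqrt b := by
  set S := CFC.sqrt a with hS
  set R := CFC.sqrt b with hR
  have hSnn : 0 ≤ S := CFC.sqrt_nonneg _
  have hRnn : 0 ≤ R := CFC.sqrt_nonneg _
  have hS2 : S * S = a := CFC.sqrt_mul_sqrt_self a ha
  have hR2 : R * R = b := CFC.sqrt_mul_sqrt_self b hb
  have h1 : a * ((b - a) * b) = 0 := by
    have e : a * ((b - a) * b) = a * b ^ 2 - a ^ 2 * b := by noncomm_ring
    rw [e, h, sub_self]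
  have h2 : (S * (b - a)) * b = 0 := by
    have := aux_sqrt_mul_left ha h1
    rwa [← mul_assoc] at this
  have h3 : (S * (b - a)) * R = 0 := aux_sqrt_mul_right hb h2
  set U := S * ((R - S) * R) with hU
  have h4 : U * R + S * U = 0 := by
    have e : U * R + S * U = (S * ((R * R) - (S * S))) * R := by rw [hU]; noncomm_ring
    rw [e, hS2, hR2, h3]
  have h5 : U * R = -(S * U) := eq_neg_of_add_eq_zero_left h4
  have h6 : (star U * U) * R = -(star U * (S * U)) := by
    rw [mul_assoc, h5, mul_neg]
  have h7 : 0 ≤ star U * (S * U) := by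
    have := star_left_conjugate_nonneg hSnn U
    rwa [mul_assoc] at this
  have h8 : (star U * U) * R ≤ 0 := by rw [h6]; exact neg_nonpos.mpr h7
  have hWsa : IsSelfAdjoint (star U * (S * U)) := by
    have hSs : IsSelfAdjoint S := .of_nonneg hSnn
    rw [IsSelfAdjoint]
    calc star (star U * (S * U)) = (star U * star S) * star (star U) := by
          rw [star_mul, star_mul]
      _ = star U * (S * U) := by rw [hSs.star_eq, star_star, mul_assoc]
  have h9 : 0 ≤ (star U * U) * R := by
    refine aux_mul_nonneg_of_commute (star_mul_self_nonneg U) hRnn ?_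
    have hRs : IsSelfAdjoint R := .of_nonneg hRnn
    have hXs : IsSelfAdjoint (star U * U) := IsSelfAdjoint.star_mul_self U
    have hsa2 : IsSelfAdjoint ((star U * U) * R) := by
      rw [h6]; exact hWsa.neg
    calc (star U * U) * R = star ((star U * U) * R) := hsa2.star_eq.symm
      _ = R * (star U * U) := by rw [star_mul, hXs.star_eq, hRs.star_eq]
  have h10 : star U * (S * U) = 0 := by
    have hz : (star U * U) * R = 0 := le_antisymm h8 h9
    rw [hz] at h6
    exact (neg_eq_zero.mp h6.symm)
  have h11 : S * U = 0 := by
    have hss : CFC.sqrt S * CFC.sqrt S = S := CFC.sqrt_mul_sqrt_self S hSnn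
    have hs' : IsSelfAdjoint (CFC.sqrt S) := .of_nonneg (CFC.sqrt_nonneg _)
    have e : star (CFC.sqrt S * U) * (CFC.sqrt S * U) = star U * (S * U) := by
      rw [star_mul, hs'.star_eq]
      calc (star U * CFC.sqrt S) * (CFC.sqrt S * U)
          = star U * ((CFC.sqrt S * CFC.sqrt S) * U) := by noncomm_ring
        _ = star U * (S * U) := by rw [hss]
    have hz : CFC.sqrt S * U = 0 := by
      rw [← CStarRing.star_mul_self_eq_zero_iff, e, h10]
    calc S * U = (CFC.sqrt S * CFC.sqrt S) * U := by rw [hss]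
      _ = CFC.sqrt S * (CFC.sqrt S * U) := mul_assoc _ _ _
      _ = 0 := by rw [hz, mul_zero]
  have h12 : a * ((R - S) * R) = 0 := by
    calc a * ((R - S) * R) = (S * S) * ((R - S) * R) := by rw [hS2]
      _ = S * (S * ((R - S) * R)) := mul_assoc _ _ _
      _ = S * U := by rw [← hU]
      _ = 0 := h11
  have h13 : U = 0 := aux_sqrt_mul_left ha h12
  have e : S * b - a * R = U := by rw [hU, ← hS2, ← hR2]; noncomm_ring
  rw [h13] at e
  exact sub_eq_zero.mp e

end Aux

set_option maxHeartbeats 1600000 in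
/-- For a quasi-projection pair `(p, q)` with `t₁ = p(1-q)` and `t₂ = (1-p)q`, one has
`|tᵢ| · |tⱼ*|² = |tᵢ|² · |tⱼ*|` for all `i, j ∈ {1, 2}`, where `|a| = CFC.sqrt (star a * a)`
and `|a*| = CFC.sqrt (a * star a)`. -/
theorem quasiProjectionPair_abs_commutation
    {A : Type*} [CStarAlgebra A] [PartialOrder A] [StarOrderedRing A] (p q : A)
    (hp_star : star p = p) (hp_idem : p * p = p) (hq_idem : q * q = q)
    (hpq : star q = (2 * p - 1) * q * (2 * p - 1)) :
    ∀ s t : A, (s = p * (1 - q) ∨ s = (1 - p) * q) →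
      (t = p * (1 - q) ∨ t = (1 - p) * q) →
      CFC.sqrt (star s * s) * (CFC.sqrt (t * star t)) ^ 2 =
        (CFC.sqrt (star s * s)) ^ 2 * CFC.sqrt (t * star t) := by
  intro s t hs ht
  have hA : 0 ≤ star s * s := star_mul_self_nonneg s
  have hB : 0 ≤ t * star t := mul_star_self_nonneg t
  have key : (star s * s) * (t * star t) ^ 2 = (star s * s) ^ 2 * (t * star t) := by
    have hp1 : ∀ x : A, p * (p * x) = p * x := fun x ↦ by rw [← mul_assoc, hp_idem]
    have hq1 : ∀ x : A, q * (q * x) = q * x := fun x ↦ by rw [← mul_assoc, hq_idem]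
    have hqs : star q = p * (q * p) + p * (q * p) + p * (q * p) + p * (q * p)
        - p * q - p * q - q * p - q * p + q := by
      rw [hpq]; noncomm_ring
    have hcore : s * (t * (star t * t)) = s * (star s * (s * t)) := by
      rcases hs with rfl | rfl <;> rcases ht with rfl | rfl <;>
      · simp only [star_mul, star_sub, star_one, hp_star, hqs,
          mul_sub, sub_mul, mul_add, add_mul, mul_one, one_mul, mul_assoc,
          hp1, hq1, hp_idem, hq_idem]
        noncomm_ring
    have e : (star s * s) * (t * star t) ^ 2 - (star s * s) ^ 2 * (t * star t)
        = star s * ((s * (t * (star t * t)) - s * (star s * (s * t))) * star t) := by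
      noncomm_ring
    rw [hcore, sub_self, zero_mul, mul_zero] at e
    exact sub_eq_zero.mp e
  rw [CFC.sq_sqrt (t * star t) hB, CFC.sq_sqrt (star s * s) hA]
  exact aux_sqrt_comm hA hB key
end

section
/- Let (P,Q) be a quasi-projection pair of bounded linear operators on a complex Hilbert space H. Then ran(P) ∩ ran(Q) = ran(P) ∩ ran(Q*), ker(P) ∩ ker(Q) = ker(P) ∩ ker(Q*), ran(P) ∩ ker(Q) = ran(P) ∩ ker(Q*), and ker(P) ∩ ran(Q) = ker(P) ∩ ran(Q*). -/
set_option linter.unusedSectionVars false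

noncomputable section

open ContinuousLinearMap

variable {H : Type*} [NormedAddCommGroup H] [InnerProductSpace ℂ H] [CompleteSpace H]

private lemma mem_range_iff_idem (T : H →L[ℂ] H) (hT : T * T = T) {x : H} :
    x ∈ LinearMap.range (T : H →ₗ[ℂ] H) ↔ T x = x := by
  constructor
  · rintro ⟨y, rfl⟩
    have := congrFun (congrArg (DFunLike.coe) hT) y
    simpa using this
  · intro h; exact ⟨x, h⟩

/-- For a quasi-projection pair `(P, Q)` on a complex Hilbert space, the ranges and kernels
of `Q` and `Q*` have the same intersections with the range and the kernel of `P`. -/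
theorem quasiProjectionPair_range_ker_inter (P Q : H →L[ℂ] H)
    (hPsa : ContinuousLinearMap.adjoint P = P) (hP : P * P = P) (hQ : Q * Q = Q)
    (hPQ : ContinuousLinearMap.adjoint Q = (2 * P - 1) * Q * (2 * P - 1)) :
    LinearMap.range (P : H →ₗ[ℂ] H) ⊓ LinearMap.range (Q : H →ₗ[ℂ] H)
        = LinearMap.range (P : H →ₗ[ℂ] H) ⊓ LinearMap.range (ContinuousLinearMap.adjoint Q : H →ₗ[ℂ] H) ∧
    LinearMap.ker (P : H →ₗ[ℂ] H) ⊓ LinearMap.ker (Q : H →ₗ[ℂ] H)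
        = LinearMap.ker (P : H →ₗ[ℂ] H) ⊓ LinearMap.ker (ContinuousLinearMap.adjoint Q : H →ₗ[ℂ] H) ∧
    LinearMap.range (P : H →ₗ[ℂ] H) ⊓ LinearMap.ker (Q : H →ₗ[ℂ] H)
        = LinearMap.range (P : H →ₗ[ℂ] H) ⊓ LinearMap.ker (ContinuousLinearMap.adjoint Q : H →ₗ[ℂ] H) ∧
    LinearMap.ker (P : H →ₗ[ℂ] H) ⊓ LinearMap.range (Q : H →ₗ[ℂ] H)
        = LinearMap.ker (P : H →ₗ[ℂ] H) ⊓ LinearMap.range (ContinuousLinearMap.adjoint Q : H →ₗ[ℂ] H) := by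
  set U : H →L[ℂ] H := 2 * P - 1 with hUdef
  -- U is an involution
  have hU2 : U * U = 1 := by
    have : U * U = 4 * (P * P) - 4 * P + 1 := by rw [hUdef]; noncomm_ring
    rw [this, hP]; noncomm_ring
  have hUU : ∀ x, U (U x) = x := by
    intro x
    have := congrFun (congrArg (DFunLike.coe) hU2) x
    simpa using this
  -- adjoint Q is idempotent
  have hQa : ContinuousLinearMap.adjoint Q * ContinuousLinearMap.adjoint Q
      = ContinuousLinearMap.adjoint Q := by
    calc ContinuousLinearMap.adjoint Q * ContinuousLinearMap.adjoint Q
        = ContinuousLinearMap.adjoint (Q * Q) := (ContinuousLinearMap.adjoint_comp Q Q).symm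
      _ = ContinuousLinearMap.adjoint Q := by rw [hQ]
  -- pointwise formulas
  have hQax : ∀ x, ContinuousLinearMap.adjoint Q x = U (Q (U x)) := by
    intro x
    have := congrFun (congrArg (DFunLike.coe) hPQ) x
    simpa [hUdef] using this
  have hQ' : Q = U * ContinuousLinearMap.adjoint Q * U := by
    rw [hPQ]
    calc Q = 1 * Q * 1 := by noncomm_ring
      _ = (U * U) * Q * (U * U) := by rw [hU2]
      _ = U * (U * Q * U) * U := by noncomm_ring
  have hQx : ∀ x, Q x = U (ContinuousLinearMap.adjoint Q (U x)) := by
    intro x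
    have := congrFun (congrArg (DFunLike.coe) hQ') x
    simpa using this
  -- U acts as identity on ran P and as -1 on ker P
  have hUfix : ∀ x, P x = x → U x = x := by
    intro x hx
    have : U x = 2 • P x - x := by simp [hUdef, two_smul, two_mul]
    rw [this, hx, two_smul]; abel
  have hUneg : ∀ x, P x = 0 → U x = -x := by
    intro x hx
    have : U x = 2 • P x - x := by simp [hUdef, two_smul, two_mul]
    rw [this, hx]; simp
  -- main transfer lemma
  have main : ∀ (A B : H →L[ℂ] H), (∀ x, B x = U (A (U x))) →
      ∀ x, (U x = x ∨ U x = -x) → (A x = x → B x = x) ∧ (A x = 0 → B x = 0) := by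
    intro A B hAB x hx
    rcases hx with h | h
    · constructor
      · intro hAx; rw [hAB, h, hAx, h]
      · intro hAx; rw [hAB, h, hAx]; simp
    · constructor
      · intro hAx
        rw [hAB, h, map_neg, hAx, map_neg, h, neg_neg]
      · intro hAx
        rw [hAB, h, map_neg, hAx]; simp
  have dir1 := main Q (ContinuousLinearMap.adjoint Q) hQax
  have dir2 := main (ContinuousLinearMap.adjoint Q) Q hQx
  refine ⟨?_, ?_, ?_, ?_⟩
  · ext x
    simp only [Submodule.mem_inf, mem_range_iff_idem P hP, mem_range_iff_idem Q hQ,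
      mem_range_iff_idem _ hQa]
    constructor
    · rintro ⟨h1, h2⟩
      exact ⟨h1, (dir1 x (Or.inl (hUfix x h1))).1 h2⟩
    · rintro ⟨h1, h2⟩
      exact ⟨h1, (dir2 x (Or.inl (hUfix x h1))).1 h2⟩
  · ext x
    simp only [Submodule.mem_inf, LinearMap.mem_ker, ContinuousLinearMap.coe_coe]
    constructor
    · rintro ⟨h1, h2⟩
      exact ⟨h1, (dir1 x (Or.inr (hUneg x h1))).2 h2⟩
    · rintro ⟨h1, h2⟩
      exact ⟨h1, (dir2 x (Or.inr (hUneg x h1))).2 h2⟩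
  · ext x
    simp only [Submodule.mem_inf, mem_range_iff_idem P hP, LinearMap.mem_ker,
      ContinuousLinearMap.coe_coe]
    constructor
    · rintro ⟨h1, h2⟩
      exact ⟨h1, (dir1 x (Or.inl (hUfix x h1))).2 h2⟩
    · rintro ⟨h1, h2⟩
      exact ⟨h1, (dir2 x (Or.inl (hUfix x h1))).2 h2⟩
  · ext x
    simp only [Submodule.mem_inf, LinearMap.mem_ker, ContinuousLinearMap.coe_coe,
      mem_range_iff_idem Q hQ, mem_range_iff_idem _ hQa]
    constructor
    · rintro ⟨h1, h2⟩
      exact ⟨h1, (dir1 x (Or.inr (hUneg x h1))).1 h2⟩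
    · rintro ⟨h1, h2⟩
      exact ⟨h1, (dir2 x (Or.inr (hUneg x h1))).1 h2⟩
end
end

section
/- Let P and Q be bounded idempotent linear operators on a complex Hilbert space H (P² = P, Q² = Q). Then (i) ker((I−Q)(I−P)) = ran(P) + (ker(P) ∩ ran(Q)), and (ii) ker((I−P)QP) = ker(P) + (ran(P) ∩ ran(Q)) + (ran(P) ∩ ker(Q)), where the sums are sums of linear subspaces of H. -/
set_option linter.unusedSectionVars false

noncomputable section

open ContinuousLinearMap

variable {H : Type*} [NormedAddCommGroup H] [InnerProductSpace ℂ H] [CompleteSpace H]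

/-- For idempotents `P, Q` on a complex Hilbert space:
`ker((I-Q)(I-P)) = ran P + (ker P ⊓ ran Q)` and
`ker((I-P)QP) = ker P + (ran P ⊓ ran Q) + (ran P ⊓ ker Q)`. -/
theorem ker_of_idempotent_products (P Q : H →L[ℂ] H) (hP : P * P = P) (hQ : Q * Q = Q) :
    LinearMap.ker (((1 - Q) * (1 - P) : H →L[ℂ] H) : H →ₗ[ℂ] H)
        = LinearMap.range (P : H →ₗ[ℂ] H) ⊔ (LinearMap.ker (P : H →ₗ[ℂ] H) ⊓ LinearMap.range (Q : H →ₗ[ℂ] H)) ∧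
    LinearMap.ker (((1 - P) * Q * P : H →L[ℂ] H) : H →ₗ[ℂ] H)
        = LinearMap.ker (P : H →ₗ[ℂ] H) ⊔ (LinearMap.range (P : H →ₗ[ℂ] H) ⊓ LinearMap.range (Q : H →ₗ[ℂ] H))
            ⊔ (LinearMap.range (P : H →ₗ[ℂ] H) ⊓ LinearMap.ker (Q : H →ₗ[ℂ] H)) := by
  have hPP : ∀ x, P (P x) = P x := fun x => by
    have := congrArg (fun T : H →L[ℂ] H => T x) hP
    simpa [mul_apply] using this
  have hQQ : ∀ x, Q (Q x) = Q x := fun x => by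
    have := congrArg (fun T : H →L[ℂ] H => T x) hQ
    simpa [mul_apply] using this
  have hPfix : ∀ x, x ∈ LinearMap.range (P : H →ₗ[ℂ] H) → P x = x := by
    rintro _ ⟨y, rfl⟩; exact hPP y
  have hQfix : ∀ x, x ∈ LinearMap.range (Q : H →ₗ[ℂ] H) → Q x = x := by
    rintro _ ⟨y, rfl⟩; exact hQQ y
  constructor
  · apply le_antisymm
    · intro x hx
      have hx' : (1 - P) x - Q ((1 - P) x) = 0 := by
        simpa [mul_apply, sub_apply, one_apply] using hx
      have hfix : Q (x - P x) = x - P x := by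
        have := sub_eq_zero.mp hx'
        simpa [sub_apply, one_apply] using this.symm
      have hdecomp : x = P x + (x - P x) := by abel
      rw [hdecomp]
      refine Submodule.add_mem_sup ⟨x, rfl⟩ ⟨?_, ⟨x - P x, hfix⟩⟩
      show P (x - P x) = 0
      simp [map_sub, hPP]
    · refine sup_le ?_ ?_
      · rintro x hx
        show ((1 - Q) * (1 - P)) x = 0
        simp [mul_apply, sub_apply, one_apply, hPfix x hx]
      · rintro x ⟨hk, hr⟩
        show ((1 - Q) * (1 - P)) x = 0
        have hk' : P x = 0 := hk
        simp [mul_apply, sub_apply, one_apply, hk', hQfix x hr]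
  · apply le_antisymm
    · intro x hx
      have hx' : Q (P x) - P (Q (P x)) = 0 := by
        simpa [mul_apply, sub_apply, one_apply] using hx
      have hQPfix : P (Q (P x)) = Q (P x) := (sub_eq_zero.mp hx').symm
      have hdecomp : x = ((x - P x) + Q (P x)) + (P x - Q (P x)) := by abel
      rw [hdecomp]
      refine Submodule.add_mem_sup (Submodule.add_mem_sup ?_ ?_) ?_
      · show P (x - P x) = 0
        simp [map_sub, hPP]
      · exact ⟨⟨Q (P x), hQPfix⟩, ⟨P x, rfl⟩⟩
      · refine ⟨⟨x - Q (P x), ?_⟩, ?_⟩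
        · simp [map_sub, hQPfix]
        · show Q (P x - Q (P x)) = 0
          simp [map_sub, hQQ]
    · refine sup_le (sup_le ?_ ?_) ?_
      · intro x hx
        have hx' : P x = 0 := hx
        show ((1 - P) * Q * P) x = 0
        simp [mul_apply, sub_apply, one_apply, hx']
      · rintro x ⟨hrP, hrQ⟩
        show ((1 - P) * Q * P) x = 0
        simp [mul_apply, sub_apply, one_apply, hPfix x hrP, hQfix x hrQ]
      · rintro x ⟨hrP, hkQ⟩
        have hkQ' : Q x = 0 := hkQ
        show ((1 - P) * Q * P) x = 0
        simp [mul_apply, sub_apply, one_apply, hPfix x hrP, hkQ']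
end
end

section
/- Let (P,Q) be a quasi-projection pair of bounded linear operators on a complex Hilbert space H, and set T₁ = P(I−Q) and H₁ = ran(P) ∩ ran(Q). Then P equals the orthogonal projection onto the closure of ran(T₁) plus the orthogonal projection onto H₁, and the orthogonal projection onto the closure of ran(Q) equals the orthogonal projection onto the closure of ran(Q(I−P)) plus the orthogonal projection onto H₁. -/
set_option linter.unusedSectionVars false

noncomputable section

open ContinuousLinearMap

variable {H : Type*} [NormedAddCommGroup H] [InnerProductSpace ℂ H] [CompleteSpace H]

/-- The orthogonal projection onto a closed subspace `K` of `H`, regarded as a bounded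
operator on `H`. -/
def projOn (K : Submodule ℂ H) (hK : IsClosed (K : Set H)) : H →L[ℂ] H :=
  haveI : CompleteSpace K := hK.completeSpace_coe
  K.subtypeL ∘L K.orthogonalProjectionOnto

local notation "⟪" x ", " y "⟫" => @inner ℂ _ _ x y

lemma projOn_apply (K : Submodule ℂ H) (hK : IsClosed (K : Set H)) (x : H) :
    haveI : CompleteSpace K := hK.completeSpace_coe
    projOn K hK x = (K.orthogonalProjectionOnto x : H) := rfl

lemma projOn_congr {K K' : Submodule ℂ H} (h : K = K') (hK : IsClosed (K : Set H))
    (hK' : IsClosed (K' : Set H)) : projOn K hK = projOn K' hK' := by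
  subst h; rfl

lemma projOn_eq_add (K M N : Submodule ℂ H)
    (hK : IsClosed (K : Set H)) (hM : IsClosed (M : Set H)) (hN : IsClosed (N : Set H))
    (hMK : M ≤ K) (hNK : N ≤ K) (hMN : M ≤ Nᗮ)
    (hres : ∀ x ∈ K, x ∈ Mᗮ → x ∈ N) :
    projOn K hK = projOn M hM + projOn N hN := by
  haveI : CompleteSpace K := hK.completeSpace_coe
  haveI : CompleteSpace M := hM.completeSpace_coe
  haveI : CompleteSpace N := hN.completeSpace_coe
  ext y
  rw [ContinuousLinearMap.add_apply, projOn_apply, projOn_apply, projOn_apply]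
  set pM := (M.orthogonalProjectionOnto y : H) with hpM
  set pN := (N.orthogonalProjectionOnto y : H) with hpN
  apply Submodule.eq_starProjection_of_mem_of_inner_eq_zero
  · exact K.add_mem (hMK (SetLike.coe_mem _)) (hNK (SetLike.coe_mem _))
  · intro w hw
    set m := (M.orthogonalProjectionOnto w : H) with hm
    have hmM : m ∈ M := SetLike.coe_mem _
    have hrM : w - m ∈ Mᗮ := Submodule.sub_starProjection_mem_orthogonal w
    have hrN : w - m ∈ N := hres _ (K.sub_mem hw (hMK hmM)) hrM
    have h1 : ⟪y - pM, m⟫ = 0 := Submodule.starProjection_inner_eq_zero y m hmM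
    have h2 : ⟪pN, m⟫ = 0 := by
      have := (Submodule.mem_orthogonal N m).1 (hMN hmM)
      exact this pN (SetLike.coe_mem _)
    have h3 : ⟪y - pN, w - m⟫ = 0 := Submodule.starProjection_inner_eq_zero y _ hrN
    have h4 : ⟪pM, w - m⟫ = 0 :=
      ((Submodule.mem_orthogonal' N pM).1 (hMN (SetLike.coe_mem _))) (w - m) hrN
    have key : ⟪y - (pM + pN), w⟫
        = (⟪y - pM, m⟫ - ⟪pN, m⟫) + (⟪y - pN, w - m⟫ - ⟪pM, w - m⟫) := by
      have e : (y - pM) - pN = y - (pM + pN) := by abel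
      have e' : (y - pN) - pM = y - (pM + pN) := by abel
      rw [← inner_sub_left, ← inner_sub_left, e, e', ← inner_add_right,
        add_sub_cancel]
    rw [key, h1, h2, h3, h4]; ring

theorem range_eq_ker_of_idem (T : H →L[ℂ] H) (h : T * T = T) :
    LinearMap.range (T : H →ₗ[ℂ] H) = LinearMap.ker ((1 - T : H →L[ℂ] H) : H →ₗ[ℂ] H) := by
  ext x
  constructor
  · rintro ⟨y, rfl⟩
    have hy : T (T y) = T y := congrFun (congrArg DFunLike.coe h) y
    simp [LinearMap.mem_ker, hy]
  · intro hx
    have hx' : x - T x = 0 := by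
      have := LinearMap.mem_ker.mp hx
      simpa using this
    exact ⟨x, (sub_eq_zero.mp hx').symm⟩

theorem isClosed_range_of_idem (T : H →L[ℂ] H) (h : T * T = T) :
    IsClosed ((LinearMap.range (T : H →ₗ[ℂ] H) : Submodule ℂ H) : Set H) := by
  rw [range_eq_ker_of_idem T h]
  exact ContinuousLinearMap.isClosed_ker _

theorem isClosed_inf {K L : Submodule ℂ H} (hK : IsClosed (K : Set H))
    (hL : IsClosed (L : Set H)) : IsClosed ((K ⊓ L : Submodule ℂ H) : Set H) := by
  rw [Submodule.coe_inf]
  exact hK.inter hL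

/-- The orthogonal projection onto the closure of the range of an operator. -/
def projCl (T : H →L[ℂ] H) : H →L[ℂ] H :=
  projOn (LinearMap.range (T : H →ₗ[ℂ] H)).topologicalClosure
    (Submodule.isClosed_topologicalClosure _)

-- x orthogonal to closure of range T implies adjoint T x = 0
lemma adjoint_eq_zero_of_mem_orth {T : H →L[ℂ] H} {x : H}
    (hx : x ∈ ((LinearMap.range (T : H →ₗ[ℂ] H)).topologicalClosure)ᗮ) :
    ContinuousLinearMap.adjoint T x = 0 := by
  have hTx : ∀ y, ⟪T y, x⟫ = 0 := fun y =>
    (Submodule.mem_orthogonal _ x).1 hx (T y)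
      (Submodule.le_topologicalClosure _ ⟨y, rfl⟩)
  have h0 : ⟪ContinuousLinearMap.adjoint T x, ContinuousLinearMap.adjoint T x⟫ = 0 := by
    rw [ContinuousLinearMap.adjoint_inner_right]
    exact hTx _
  exact inner_self_eq_zero.mp h0

/-- For a quasi-projection pair `(P, Q)`:
`P = P_{cl ran(P(I-Q))} + P_{H₁}` and `P_{cl ran Q} = P_{cl ran(Q(I-P))} + P_{H₁}`,
where `H₁ = ran P ⊓ ran Q`. -/
theorem quasiProjectionPair_proj_decomp_P (P Q : H →L[ℂ] H)
    (hPsa : ContinuousLinearMap.adjoint P = P) (hP : P * P = P) (hQ : Q * Q = Q)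
    (hPQ : ContinuousLinearMap.adjoint Q = (2 * P - 1) * Q * (2 * P - 1)) :
    P = projCl (P * (1 - Q))
        + projOn (LinearMap.range (P : H →ₗ[ℂ] H) ⊓ LinearMap.range (Q : H →ₗ[ℂ] H))
            (isClosed_inf (isClosed_range_of_idem P hP) (isClosed_range_of_idem Q hQ)) ∧
    projCl Q = projCl (Q * (1 - P))
        + projOn (LinearMap.range (P : H →ₗ[ℂ] H) ⊓ LinearMap.range (Q : H →ₗ[ℂ] H))
            (isClosed_inf (isClosed_range_of_idem P hP) (isClosed_range_of_idem Q hQ)) := by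
  set J : H →L[ℂ] H := 2 * P - 1 with hJdef
  have hPP : ∀ x, P (P x) = P x := fun x => DFunLike.congr_fun hP x
  have hQQ : ∀ x, Q (Q x) = Q x := fun x => DFunLike.congr_fun hQ x
  have hstarQ : ∀ x, ContinuousLinearMap.adjoint Q x = J (Q (J x)) := fun x =>
    DFunLike.congr_fun hPQ x
  have hJapp : ∀ x, J x = P x + P x - x := by
    intro x
    rw [hJdef, two_mul]
    simp [ContinuousLinearMap.sub_apply, ContinuousLinearMap.add_apply]
  have hJfix : ∀ x, P x = x → J x = x := by
    intro x h; rw [hJapp, h]; abel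
  have hJJ : ∀ x, J (J x) = x := by
    intro x
    rw [hJapp (J x), hJapp x]
    simp only [map_add, map_sub, hPP]
    abel
  have hmemP : ∀ x, x ∈ LinearMap.range (P : H →ₗ[ℂ] H) ↔ P x = x := by
    intro x
    constructor
    · rintro ⟨y, rfl⟩; exact hPP y
    · intro h; exact ⟨x, h⟩
  have hmemQ : ∀ x, x ∈ LinearMap.range (Q : H →ₗ[ℂ] H) ↔ Q x = x := by
    intro x
    constructor
    · rintro ⟨y, rfl⟩; exact hQQ y
    · intro h; exact ⟨x, h⟩
  -- adjoint Q fixes elements of H₁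
  have hN : ∀ n, P n = n → Q n = n →
      ContinuousLinearMap.adjoint Q n = n := by
    intro n hPn hQn
    rw [hstarQ, hJfix n hPn, hQn, hJfix n hPn]
  set N : Submodule ℂ H := LinearMap.range (P : H →ₗ[ℂ] H) ⊓ LinearMap.range (Q : H →ₗ[ℂ] H) with hNdef
  -- orthogonality of ranges to N
  have horthP : ∀ y, ∀ n ∈ N, ⟪(P * (1 - Q)) y, n⟫ = 0 := by
    intro y n hn
    have hPn : P n = n := (hmemP n).1 (Submodule.mem_inf.mp hn).1
    have hQn : Q n = n := (hmemQ n).1 (Submodule.mem_inf.mp hn).2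
    have : ⟪(P * (1 - Q)) y, n⟫ = ⟪(1 - Q) y, ContinuousLinearMap.adjoint P n⟫ := by
      rw [ContinuousLinearMap.adjoint_inner_right]
      rfl
    rw [this, hPsa, hPn]
    have : ⟪(1 - Q) y, n⟫ = ⟪y, n⟫ - ⟪Q y, n⟫ := by
      simp [ContinuousLinearMap.sub_apply, inner_sub_left]
    rw [this]
    have : ⟪Q y, n⟫ = ⟪y, ContinuousLinearMap.adjoint Q n⟫ := by
      rw [ContinuousLinearMap.adjoint_inner_right]
    rw [this, hN n hPn hQn]
    ring
  have horthQ : ∀ y, ∀ n ∈ N, ⟪(Q * (1 - P)) y, n⟫ = 0 := by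
    intro y n hn
    have hPn : P n = n := (hmemP n).1 (Submodule.mem_inf.mp hn).1
    have hQn : Q n = n := (hmemQ n).1 (Submodule.mem_inf.mp hn).2
    have e1 : ⟪(Q * (1 - P)) y, n⟫ = ⟪(1 - P) y, ContinuousLinearMap.adjoint Q n⟫ := by
      rw [ContinuousLinearMap.adjoint_inner_right]
      rfl
    rw [e1, hN n hPn hQn]
    have e2 : ⟪(1 - P) y, n⟫ = ⟪y, n⟫ - ⟪P y, n⟫ := by
      simp [ContinuousLinearMap.sub_apply, inner_sub_left]
    rw [e2]
    have e3 : ⟪P y, n⟫ = ⟪y, ContinuousLinearMap.adjoint P n⟫ := by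
      rw [ContinuousLinearMap.adjoint_inner_right]
    rw [e3, hPsa, hPn]
    ring
  -- residual for goal 1
  have hres1 : ∀ x ∈ LinearMap.range (P : H →ₗ[ℂ] H),
      x ∈ ((LinearMap.range (P * (1 - Q) : H →ₗ[ℂ] H)).topologicalClosure)ᗮ → x ∈ N := by
    intro x hxP hxM
    have hPx : P x = x := (hmemP x).1 hxP
    have hT : ContinuousLinearMap.adjoint (P * (1 - Q)) x = 0 :=
      adjoint_eq_zero_of_mem_orth hxM
    have hadj : ContinuousLinearMap.adjoint (P * (1 - Q))
        = (1 - ContinuousLinearMap.adjoint Q) * P := by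
      rw [← ContinuousLinearMap.star_eq_adjoint, star_mul, star_sub, star_one,
        ContinuousLinearMap.star_eq_adjoint, ContinuousLinearMap.star_eq_adjoint, hPsa]
    rw [hadj] at hT
    have hT' : P x - ContinuousLinearMap.adjoint Q (P x) = 0 := by
      simpa [ContinuousLinearMap.mul_apply, ContinuousLinearMap.sub_apply] using hT
    rw [hPx] at hT'
    have hQsx : ContinuousLinearMap.adjoint Q x = x := by
      have := sub_eq_zero.mp hT'
      exact this.symm
    -- x = J (Q (J x)) = J (Q x), so Q x = J x = x
    have h1 : x = J (Q x) := by
      conv_lhs => rw [← hQsx, hstarQ x, hJfix x hPx]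
    have h2 : J x = Q x := by
      have h2' := congrArg J h1
      rw [hJJ] at h2'
      exact h2'
    have hQx : Q x = x := by rw [← h2, hJfix x hPx]
    exact Submodule.mem_inf.mpr ⟨hxP, (hmemQ x).2 hQx⟩
  -- residual for goal 2
  have hres2 : ∀ x ∈ LinearMap.range (Q : H →ₗ[ℂ] H),
      x ∈ ((LinearMap.range (Q * (1 - P) : H →ₗ[ℂ] H)).topologicalClosure)ᗮ → x ∈ N := by
    intro x hxQ hxM
    have hQx : Q x = x := (hmemQ x).1 hxQ
    have hT : ContinuousLinearMap.adjoint (Q * (1 - P)) x = 0 :=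
      adjoint_eq_zero_of_mem_orth hxM
    have hadj : ContinuousLinearMap.adjoint (Q * (1 - P))
        = (1 - P) * ContinuousLinearMap.adjoint Q := by
      rw [← ContinuousLinearMap.star_eq_adjoint, star_mul, star_sub, star_one,
        ContinuousLinearMap.star_eq_adjoint, ContinuousLinearMap.star_eq_adjoint, hPsa]
    rw [hadj] at hT
    have hT0 : ContinuousLinearMap.adjoint Q x - P (ContinuousLinearMap.adjoint Q x) = 0 := by
      simpa [ContinuousLinearMap.mul_apply, ContinuousLinearMap.sub_apply] using hT
    set z : H := x - P x with hzdef
    set w : H := Q z with hwdef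
    have hPz : P z = 0 := by rw [hzdef, map_sub, hPP]; abel
    have hQPx : Q (P x) = x - w := by
      rw [hwdef, hzdef, map_sub, hQx]; abel
    have h1 : Q (J x) = x - w - w := by
      rw [hJapp]
      simp only [map_add, map_sub, hQx, hQPx]
      abel
    have hA : ContinuousLinearMap.adjoint Q x
        = (P x - P w - P w) + (P x - P w - P w) - (x - w - w) := by
      rw [hstarQ, h1, hJapp]
      simp only [map_sub]
    have E' : ContinuousLinearMap.adjoint Q x - P (ContinuousLinearMap.adjoint Q x)
        = (w + w - P w - P w) - (x - P x) := by
      rw [hA]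
      simp only [map_add, map_sub, hPP]
      abel
    rw [hT0] at E'
    have key1 : x - P x = w + w - P w - P w :=
      (sub_eq_zero.mp E'.symm).symm
    have hQw : Q w = w := by rw [hwdef]; exact hQQ z
    have hstarQz : ContinuousLinearMap.adjoint Q z = w - P w - P w := by
      have hJz : J z = -z := by rw [hJapp, hPz]; abel
      rw [hstarQ, hJz, map_neg, ← hwdef, hJapp, map_neg]
      abel
    have i1 : ⟪(x - P x : H), w⟫ = (⟪w, w⟫ + ⟪w, w⟫) - (⟪P w, w⟫ + ⟪P w, w⟫) := by
      rw [key1]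
      simp [inner_sub_left, inner_add_left]
      ring
    have i2 : ⟪(x - P x : H), w⟫ = ⟪w, w⟫ - (⟪P w, w⟫ + ⟪P w, w⟫) := by
      have c1 : ⟪(x - P x : H), w⟫ = ⟪(z : H), Q w⟫ := by rw [hQw, hzdef]
      have c2 : ⟪(z : H), Q w⟫ = ⟪ContinuousLinearMap.adjoint Q z, w⟫ :=
        (ContinuousLinearMap.adjoint_inner_left Q w z).symm
      rw [c1, c2, hstarQz]
      simp [inner_sub_left]
      ring
    have hw0 : ⟪w, w⟫ = 0 := by
      have h := i1.symm.trans i2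
      linear_combination h
    have hwz : w = 0 := inner_self_eq_zero.mp hw0
    have hPxx : P x = x := by
      have := key1
      rw [hwz, map_zero] at this
      have h0 : x - P x = 0 := by rw [this]; abel
      exact (sub_eq_zero.mp h0).symm
    exact Submodule.mem_inf.mpr ⟨(hmemP x).2 hPxx, hxQ⟩
  -- submodule inclusions
  have hM1K : (LinearMap.range (P * (1 - Q) : H →ₗ[ℂ] H)).topologicalClosure ≤ LinearMap.range (P : H →ₗ[ℂ] H) := by
    apply Submodule.topologicalClosure_minimal
    · rintro _ ⟨y, rfl⟩; exact ⟨(1 - Q) y, rfl⟩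
    · exact isClosed_range_of_idem P hP
  have hM2K : (LinearMap.range (Q * (1 - P) : H →ₗ[ℂ] H)).topologicalClosure ≤ LinearMap.range (Q : H →ₗ[ℂ] H) := by
    apply Submodule.topologicalClosure_minimal
    · rintro _ ⟨y, rfl⟩; exact ⟨(1 - P) y, rfl⟩
    · exact isClosed_range_of_idem Q hQ
  have hM1N : (LinearMap.range (P * (1 - Q) : H →ₗ[ℂ] H)).topologicalClosure ≤ Nᗮ := by
    apply Submodule.topologicalClosure_minimal
    · rintro _ ⟨y, rfl⟩
      rw [Submodule.mem_orthogonal']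
      intro n hn
      exact horthP y n hn
    · exact Submodule.isClosed_orthogonal N
  have hM2N : (LinearMap.range (Q * (1 - P) : H →ₗ[ℂ] H)).topologicalClosure ≤ Nᗮ := by
    apply Submodule.topologicalClosure_minimal
    · rintro _ ⟨y, rfl⟩
      rw [Submodule.mem_orthogonal']
      intro n hn
      exact horthQ y n hn
    · exact Submodule.isClosed_orthogonal N
  -- P equals projOn (range P)
  have hPproj : P = projOn (LinearMap.range (P : H →ₗ[ℂ] H)) (isClosed_range_of_idem P hP) := by
    haveI : CompleteSpace (LinearMap.range (P : H →ₗ[ℂ] H)) :=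
      (isClosed_range_of_idem P hP).completeSpace_coe
    ext x
    rw [projOn_apply]
    refine (Submodule.eq_starProjection_of_mem_of_inner_eq_zero (LinearMap.mem_range.mpr ⟨x, rfl⟩) ?_).symm
    intro u hu
    obtain ⟨y, rfl⟩ := hu
    have : ⟪(x - (P : H →ₗ[ℂ] H) x : H), (P : H →ₗ[ℂ] H) y⟫ = ⟪ContinuousLinearMap.adjoint P (x - P x), y⟫ :=
      (ContinuousLinearMap.adjoint_inner_left P y (x - P x)).symm
    rw [this, hPsa, map_sub, hPP, sub_self]
    simp
  constructor
  · exact hPproj.trans (projOn_eq_add (LinearMap.range (P : H →ₗ[ℂ] H))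
      ((LinearMap.range (P * (1 - Q) : H →ₗ[ℂ] H)).topologicalClosure) N
      (isClosed_range_of_idem P hP) (Submodule.isClosed_topologicalClosure _)
      (isClosed_inf (isClosed_range_of_idem P hP) (isClosed_range_of_idem Q hQ))
      hM1K inf_le_left hM1N hres1)
  · have hKQ : (LinearMap.range (Q : H →ₗ[ℂ] H)).topologicalClosure = LinearMap.range (Q : H →ₗ[ℂ] H) :=
      IsClosed.submodule_topologicalClosure_eq (isClosed_range_of_idem Q hQ)
    have e : projCl Q = projOn (LinearMap.range (Q : H →ₗ[ℂ] H)) (isClosed_range_of_idem Q hQ) :=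
      projOn_congr hKQ _ _
    exact e.trans (projOn_eq_add (LinearMap.range (Q : H →ₗ[ℂ] H))
      ((LinearMap.range (Q * (1 - P) : H →ₗ[ℂ] H)).topologicalClosure) N
      (isClosed_range_of_idem Q hQ) (Submodule.isClosed_topologicalClosure _)
      (isClosed_inf (isClosed_range_of_idem P hP) (isClosed_range_of_idem Q hQ))
      hM2K inf_le_right hM2N hres2)
end
end

section
/- Let (P,Q) be a quasi-projection pair of bounded linear operators on a complex Hilbert space H, and set T₁ = P(I−Q) and T₂ = (I−P)Q. Then for all nonzero complex numbers λ₁ and λ₂, ran(λ₁T₁ + λ₂T₂) = ran(T₁) + ran(T₂) as linear subspaces of H. -/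
set_option linter.unusedSectionVars false

noncomputable section

open ContinuousLinearMap

variable {H : Type*} [NormedAddCommGroup H] [InnerProductSpace ℂ H] [CompleteSpace H]

/-- For a quasi-projection pair `(P, Q)` with `T₁ = P(I-Q)` and `T₂ = (I-P)Q`, for all
nonzero complex numbers `c₁, c₂`, `ran(c₁T₁ + c₂T₂) = ran T₁ + ran T₂`. -/
theorem quasiProjectionPair_range_combination (P Q : H →L[ℂ] H)
    (hPsa : ContinuousLinearMap.adjoint P = P) (hP : P * P = P) (hQ : Q * Q = Q)
    (hPQ : ContinuousLinearMap.adjoint Q = (2 * P - 1) * Q * (2 * P - 1)) :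
    ∀ c₁ c₂ : ℂ, c₁ ≠ 0 → c₂ ≠ 0 →
      LinearMap.range (((c₁ • (P * (1 - Q)) + c₂ • ((1 - P) * Q) : H →L[ℂ] H) : H →ₗ[ℂ] H))
        = LinearMap.range (((P * (1 - Q) : H →L[ℂ] H) : H →ₗ[ℂ] H)) ⊔ LinearMap.range ((((1 - P) * Q : H →L[ℂ] H) : H →ₗ[ℂ] H)) := by
  intro c₁ c₂ hc₁ hc₂
  set T₁ := P * (1 - Q) with hT₁
  set T₂ := (1 - P) * Q with hT₂
  -- Key identities coming from idempotency of Q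
  have h1 : ∀ x, T₁ (Q x) = 0 := by
    intro x
    have : T₁ * Q = 0 := by
      rw [hT₁, mul_assoc, sub_mul, one_mul, hQ, sub_self, mul_zero]
    simpa [ContinuousLinearMap.mul_apply] using ContinuousLinearMap.ext_iff.mp this x
  have h2 : ∀ x, T₂ (Q x) = T₂ x := by
    intro x
    have : T₂ * Q = T₂ := by rw [hT₂, mul_assoc, hQ]
    simpa [ContinuousLinearMap.mul_apply] using ContinuousLinearMap.ext_iff.mp this x
  apply le_antisymm
  · rintro _ ⟨x, rfl⟩
    have : (c₁ • T₁ + c₂ • T₂) x = T₁ (c₁ • x) + T₂ (c₂ • x) := by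
      simp [ContinuousLinearMap.add_apply, ContinuousLinearMap.smul_apply]
    rw [ContinuousLinearMap.coe_coe, this]
    exact Submodule.add_mem_sup ⟨c₁ • x, rfl⟩ ⟨c₂ • x, rfl⟩
  · rw [sup_le_iff]
    constructor
    · rintro _ ⟨x, rfl⟩
      refine ⟨c₁⁻¹ • (x - Q x), ?_⟩
      simp only [ContinuousLinearMap.coe_coe, ContinuousLinearMap.add_apply, ContinuousLinearMap.smul_apply,
        map_smul, map_sub, h1, h2, sub_zero, sub_self, smul_zero, add_zero,
        smul_smul, mul_inv_cancel₀ hc₁, one_smul]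
      rw [zero_add, add_sub_cancel_right, smul_smul, inv_mul_cancel₀ hc₁, one_smul]
    · rintro _ ⟨x, rfl⟩
      refine ⟨c₂⁻¹ • (Q x), ?_⟩
      simp only [ContinuousLinearMap.coe_coe, ContinuousLinearMap.add_apply, ContinuousLinearMap.smul_apply,
        map_smul, h1, h2, smul_zero, zero_add, smul_smul]
      rw [inv_mul_cancel₀ hc₂, one_smul]
end
end

section
/- Let (P,Q) be a quasi-projection pair of bounded linear operators on a complex Hilbert space H, set T₁ = P(I−Q), T₂ = (I−P)Q, and let M be the closure of ran(P−Q). Then M equals the closure of ran(T₁) + ran(T₂), M equals the closure of ran(T₁ + T₂), and M is invariant under P, Q and Q* (i.e., P(M) ⊆ M, Q(M) ⊆ M and Q*(M) ⊆ M). -/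
set_option linter.unusedSectionVars false

noncomputable section

open ContinuousLinearMap

variable {H : Type*} [NormedAddCommGroup H] [InnerProductSpace ℂ H] [CompleteSpace H]

lemma orth_range_eq_ker_adjoint (A : H →L[ℂ] H) :
    (LinearMap.range ((A : H →L[ℂ] H) : H →ₗ[ℂ] H))ᗮ = LinearMap.ker ((ContinuousLinearMap.adjoint A : H →L[ℂ] H) : H →ₗ[ℂ] H) := by
  ext y
  simp only [Submodule.mem_orthogonal, LinearMap.mem_range, LinearMap.mem_ker,
    forall_exists_index, ContinuousLinearMap.coe_coe]
  constructor
  · intro h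
    have h' : ∀ x : H, inner ℂ x (ContinuousLinearMap.adjoint A y) = (0 : ℂ) := by
      intro x
      rw [ContinuousLinearMap.adjoint_inner_right]
      exact h (A x) x rfl
    have := h' (ContinuousLinearMap.adjoint A y)
    rwa [inner_self_eq_zero] at this
  · intro h u x hx
    subst hx
    rw [← ContinuousLinearMap.adjoint_inner_right, h, inner_zero_right]

lemma closure_range_eq_orth_ker (A : H →L[ℂ] H) :
    (LinearMap.range ((A : H →L[ℂ] H) : H →ₗ[ℂ] H)).topologicalClosure
      = (LinearMap.ker ((ContinuousLinearMap.adjoint A : H →L[ℂ] H) : H →ₗ[ℂ] H))ᗮ := by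
  rw [← orth_range_eq_ker_adjoint, Submodule.orthogonal_orthogonal_eq_closure]

/-- For a quasi-projection pair `(P, Q)` with `T₁ = P(I-Q)`, `T₂ = (I-P)Q` and
`M = cl ran(P - Q)`: `M = cl(ran T₁ + ran T₂)`, `M = cl ran(T₁ + T₂)`, and `M` is
invariant under `P`, `Q` and `Q*`. -/
theorem quasiProjectionPair_invariant_submodule (P Q : H →L[ℂ] H)
    (hPsa : ContinuousLinearMap.adjoint P = P) (hP : P * P = P) (hQ : Q * Q = Q)
    (hPQ : ContinuousLinearMap.adjoint Q = (2 * P - 1) * Q * (2 * P - 1))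
    (M : Submodule ℂ H) (hM : M = (LinearMap.range ((P - Q : H →L[ℂ] H) : H →ₗ[ℂ] H)).topologicalClosure) :
    M = (LinearMap.range ((P * (1 - Q) : H →L[ℂ] H) : H →ₗ[ℂ] H) ⊔ LinearMap.range (((1 - P) * Q : H →L[ℂ] H) : H →ₗ[ℂ] H)).topologicalClosure ∧
    M = (LinearMap.range ((P * (1 - Q) + (1 - P) * Q : H →L[ℂ] H) : H →ₗ[ℂ] H)).topologicalClosure ∧
    (∀ x ∈ M, P x ∈ M) ∧ (∀ x ∈ M, Q x ∈ M) ∧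
    (∀ x ∈ M, ContinuousLinearMap.adjoint Q x ∈ M) := by
  -- basic operator identities
  have hA2 : (2 * P - 1) * (2 * P - 1) = 1 := by
    have h : (2 * P - 1) * (2 * P - 1) = 4 * (P * P) - 4 * P + 1 := by noncomm_ring
    rw [h, hP]; noncomm_ring
  have hAP : (2 * P - 1) * P = P := by
    have h : (2 * P - 1) * P = 2 * (P * P) - P := by noncomm_ring
    rw [h, hP]; noncomm_ring
  -- elementwise versions
  have hPP : ∀ z, P (P z) = P z := fun z => by
    have := ContinuousLinearMap.ext_iff.mp hP z; simpa [mul_apply] using this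
  have hQQ : ∀ z, Q (Q z) = Q z := fun z => by
    have := ContinuousLinearMap.ext_iff.mp hQ z; simpa [mul_apply] using this
  have hAapp : ∀ z, (2 * P - 1) z = P z + P z - z := fun z => by
    simp [two_mul, ContinuousLinearMap.add_apply, ContinuousLinearMap.sub_apply,
      ContinuousLinearMap.mul_apply, ContinuousLinearMap.one_apply]
  have hAA : ∀ z, (2 * P - 1) ((2 * P - 1) z) = z := fun z => by
    have := ContinuousLinearMap.ext_iff.mp hA2 z
    simpa [mul_apply] using this
  have hAPapp : ∀ z, (2 * P - 1) (P z) = P z := fun z => by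
    have := ContinuousLinearMap.ext_iff.mp hAP z
    simpa [mul_apply] using this
  have hQadj : ∀ z, ContinuousLinearMap.adjoint Q z = (2 * P - 1) (Q ((2 * P - 1) z)) :=
    fun z => by
    have := ContinuousLinearMap.ext_iff.mp hPQ z
    simpa [mul_apply] using this
  -- the kernel K
  set K := LinearMap.ker ((ContinuousLinearMap.adjoint (P - Q) : H →L[ℂ] H) : H →ₗ[ℂ] H) with hK
  have hadj : ContinuousLinearMap.adjoint (P - Q) = P - ContinuousLinearMap.adjoint Q := by
    rw [map_sub, hPsa]
  have hmemK : ∀ y, y ∈ K ↔ P y = ContinuousLinearMap.adjoint Q y := by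
    intro y
    rw [hK, LinearMap.mem_ker, hadj, ContinuousLinearMap.coe_coe, ContinuousLinearMap.sub_apply, sub_eq_zero]
  -- key kernel facts
  have hker : ∀ y ∈ K, Q y = P y ∧ ContinuousLinearMap.adjoint Q y = P y ∧ P y ∈ K := by
    intro y hy
    rw [hmemK] at hy
    have hy' : P y = (2 * P - 1) (Q ((2 * P - 1) y)) := by rw [hy, hQadj]
    have s2 : Q ((2 * P - 1) y) = P y := by
      have := congrArg (fun z => (2 * P - 1) z) hy'
      rw [hAA, hAPapp] at this
      exact this.symm
    have s3 : Q (P y) = P y := by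
      conv_lhs => rw [← s2]
      rw [hQQ, s2]
    have s4 : Q y = P y := by
      have h2 : Q (P y + P y - y) = P y := by rw [← hAapp]; exact s2
      rw [map_sub, map_add, s3] at h2
      calc Q y = P y + P y - (P y + P y - Q y) := by abel
        _ = P y + P y - P y := by rw [h2]
        _ = P y := by abel
    have s5 : ContinuousLinearMap.adjoint Q (P y) = P y := by
      rw [hQadj, hAPapp, s3, hAPapp]
    have s6 : P y ∈ K := by rw [hmemK, hPP, s5]
    exact ⟨s4, hy.symm ▸ rfl, s6⟩
  have hkerP : ∀ y ∈ K, P y ∈ K := fun y hy => (hker y hy).2.2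
  have hkerA : ∀ y ∈ K, (2 * P - 1) y ∈ K := by
    intro y hy
    rw [hAapp]
    exact K.sub_mem (K.add_mem (hkerP y hy) (hkerP y hy)) hy
  -- M = Kᗮ
  have hMK : M = Kᗮ := by rw [hM, closure_range_eq_orth_ker]
  -- invariance
  have hPinv : ∀ x ∈ M, P x ∈ M := by
    intro x hx
    rw [hMK] at hx ⊢
    rw [Submodule.mem_orthogonal] at hx ⊢
    intro u hu
    rw [← hPsa, ContinuousLinearMap.adjoint_inner_right]
    exact hx (P u) (hkerP u hu)
  have hQinv : ∀ x ∈ M, Q x ∈ M := by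
    intro x hx
    rw [hMK] at hx ⊢
    rw [Submodule.mem_orthogonal] at hx ⊢
    intro u hu
    rw [← ContinuousLinearMap.adjoint_inner_left, (hker u hu).2.1]
    exact hx (P u) (hkerP u hu)
  have hQsinv : ∀ x ∈ M, ContinuousLinearMap.adjoint Q x ∈ M := by
    intro x hx
    rw [hMK] at hx ⊢
    rw [Submodule.mem_orthogonal] at hx ⊢
    intro u hu
    rw [← ContinuousLinearMap.adjoint_inner_left, ContinuousLinearMap.adjoint_adjoint,
      (hker u hu).1]
    exact hx (P u) (hkerP u hu)
  -- range of (P-Q) is in M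
  have hranM : ∀ x, (P - Q) x ∈ M := by
    intro x
    have : (P - Q) x ∈ LinearMap.range ((P - Q : H →L[ℂ] H) : H →ₗ[ℂ] H) := LinearMap.mem_range_self _ x
    rw [hM]
    exact (LinearMap.range ((P - Q : H →L[ℂ] H) : H →ₗ[ℂ] H)).le_topologicalClosure this
  have hMclosed : IsClosed (M : Set H) := by
    rw [hM]; exact Submodule.isClosed_topologicalClosure _
  -- Claim 1
  have hT1 : P * (1 - Q) = P * (P - Q) := by
    have h : P * (P - Q) = P * P - P * Q := by noncomm_ring
    rw [h, hP]; noncomm_ring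
  have hT2 : (1 - P) * Q = P * (P - Q) - (P - Q) := by
    have h : P * (P - Q) - (P - Q) = P * P - P * Q - P + Q := by noncomm_ring
    rw [h, hP]; noncomm_ring
  have hsub : P - Q = P * (1 - Q) - (1 - P) * Q := by noncomm_ring
  have claim1 : M = (LinearMap.range ((P * (1 - Q) : H →L[ℂ] H) : H →ₗ[ℂ] H) ⊔
      LinearMap.range (((1 - P) * Q : H →L[ℂ] H) : H →ₗ[ℂ] H)).topologicalClosure := by
    apply le_antisymm
    · rw [hM]
      apply Submodule.topologicalClosure_mono
      rintro _ ⟨x, rfl⟩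
      have hx1 : (P * (1 - Q)) x ∈ LinearMap.range ((P * (1 - Q) : H →L[ℂ] H) : H →ₗ[ℂ] H) ⊔ LinearMap.range (((1 - P) * Q : H →L[ℂ] H) : H →ₗ[ℂ] H) :=
        Submodule.mem_sup_left (LinearMap.mem_range_self _ x)
      have hx2 : ((1 - P) * Q) x ∈ LinearMap.range ((P * (1 - Q) : H →L[ℂ] H) : H →ₗ[ℂ] H) ⊔ LinearMap.range (((1 - P) * Q : H →L[ℂ] H) : H →ₗ[ℂ] H) :=
        Submodule.mem_sup_right (LinearMap.mem_range_self _ x)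
      have : (P - Q) x = (P * (1 - Q)) x - ((1 - P) * Q) x := by
        rw [hsub]; simp [ContinuousLinearMap.sub_apply]
      rw [ContinuousLinearMap.coe_coe, this]
      exact Submodule.sub_mem _ hx1 hx2
    · have hle : LinearMap.range ((P * (1 - Q) : H →L[ℂ] H) : H →ₗ[ℂ] H) ⊔ LinearMap.range (((1 - P) * Q : H →L[ℂ] H) : H →ₗ[ℂ] H) ≤ M := by
        apply sup_le
        · rintro _ ⟨x, rfl⟩
          have : (P * (1 - Q)) x = P ((P - Q) x) := by
            rw [hT1]; simp [mul_apply]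
          rw [ContinuousLinearMap.coe_coe, this]
          exact hPinv _ (hranM x)
        · rintro _ ⟨x, rfl⟩
          have : ((1 - P) * Q) x = P ((P - Q) x) - (P - Q) x := by
            rw [hT2]; simp [ContinuousLinearMap.sub_apply, mul_apply]
          rw [ContinuousLinearMap.coe_coe, this]
          exact Submodule.sub_mem _ (hPinv _ (hranM x)) (hranM x)
      exact Submodule.topologicalClosure_minimal _ hle hMclosed
  -- Claim 2
  have hid : P * (1 - Q) + (1 - P) * Q = (2 * P - 1) * (P - Q) := by
    have h : (2 * P - 1) * (P - Q) = 2 * (P * P) - 2 * (P * Q) - P + Q := by noncomm_ring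
    rw [h, hP]; noncomm_ring
  have hadj2 : ContinuousLinearMap.adjoint ((2 * P - 1) * (P - Q))
      = (P - ContinuousLinearMap.adjoint Q) * (2 * P - 1) := by
    rw [ContinuousLinearMap.mul_def, ContinuousLinearMap.adjoint_comp, hadj]
    have : ContinuousLinearMap.adjoint (2 * P - 1) = 2 * P - 1 := by
      have h2 : (2 : H →L[ℂ] H) * P - 1 = P + P - 1 := by noncomm_ring
      rw [h2, map_sub, map_add, hPsa, ContinuousLinearMap.one_def,
        ContinuousLinearMap.adjoint_id]
    rw [this]; rfl
  have hkereq : LinearMap.ker ((ContinuousLinearMap.adjoint ((2 * P - 1) * (P - Q)) : H →L[ℂ] H) : H →ₗ[ℂ] H) = K := by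
    ext y
    rw [hadj2, LinearMap.mem_ker]
    have happ : ((P - ContinuousLinearMap.adjoint Q) * (2 * P - 1)) y
        = ContinuousLinearMap.adjoint (P - Q) ((2 * P - 1) y) := by
      rw [hadj]; simp [mul_apply]
    rw [ContinuousLinearMap.coe_coe, happ]
    constructor
    · intro h
      have hmem : (2 * P - 1) y ∈ K := h
      have := hkerA _ hmem
      rwa [hAA] at this
    · intro hy
      exact (hkerA y hy : _)
  have claim2 : M = (LinearMap.range ((P * (1 - Q) + (1 - P) * Q : H →L[ℂ] H) : H →ₗ[ℂ] H)).topologicalClosure := by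
    rw [hid, closure_range_eq_orth_ker, hkereq, hMK]
  exact ⟨claim1, claim2, hPinv, hQinv, hQsinv⟩
end
end

section
/- Let (P,Q) be a quasi-projection pair of bounded linear operators on a complex Hilbert space H. Then ran(P(I−Q)) = ran(P(I−Q*)) and ran((I−P)Q) = ran((I−P)Q*) as linear subspaces of H. -/
set_option linter.unusedSectionVars false

noncomputable section

open ContinuousLinearMap

variable {H : Type*} [NormedAddCommGroup H] [InnerProductSpace ℂ H] [CompleteSpace H]

private lemma range_mul_invol (A e : H →L[ℂ] H) (he : e * e = 1) :
    LinearMap.range ((A * e : H →L[ℂ] H) : H →ₗ[ℂ] H) = LinearMap.range (A : H →ₗ[ℂ] H) := by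
  ext x
  simp only [LinearMap.mem_range, ContinuousLinearMap.coe_coe]
  constructor
  · rintro ⟨y, rfl⟩
    exact ⟨e y, by simp [mul_apply]⟩
  · rintro ⟨y, rfl⟩
    refine ⟨e y, ?_⟩
    have hy : e (e y) = y := by rw [← ContinuousLinearMap.mul_apply, he, ContinuousLinearMap.one_apply]
    simp [mul_apply, hy]

/-- For a quasi-projection pair `(P, Q)`:
`ran(P(I-Q)) = ran(P(I-Q*))` and `ran((I-P)Q) = ran((I-P)Q*)`. -/
theorem quasiProjectionPair_range_star (P Q : H →L[ℂ] H)
    (hPsa : ContinuousLinearMap.adjoint P = P) (hP : P * P = P) (hQ : Q * Q = Q)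
    (hPQ : ContinuousLinearMap.adjoint Q = (2 * P - 1) * Q * (2 * P - 1)) :
    LinearMap.range ((P * (1 - Q) : H →L[ℂ] H) : H →ₗ[ℂ] H)
        = LinearMap.range ((P * (1 - ContinuousLinearMap.adjoint Q) : H →L[ℂ] H) : H →ₗ[ℂ] H) ∧
    LinearMap.range (((1 - P) * Q : H →L[ℂ] H) : H →ₗ[ℂ] H)
        = LinearMap.range (((1 - P) * ContinuousLinearMap.adjoint Q : H →L[ℂ] H) : H →ₗ[ℂ] H) := by
  have hP0 : P * P - P = 0 := sub_eq_zero.mpr hP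
  have hP0' : P - P * P = 0 := by rw [← neg_sub, hP0, neg_zero]
  have he : ((2 : H →L[ℂ] H) * P - 1) * (2 * P - 1) = 1 := by
    rw [← sub_eq_zero]
    have key : ((2 : H →L[ℂ] H) * P - 1) * (2 * P - 1) - 1 = 4 * (P * P - P) := by
      noncomm_ring
    rw [key, hP0]; simp
  have he' : ((1 : H →L[ℂ] H) - 2 * P) * (1 - 2 * P) = 1 := by
    have key : ((1 : H →L[ℂ] H) - 2 * P) * (1 - 2 * P) = (2 * P - 1) * (2 * P - 1) := by
      noncomm_ring
    rw [key, he]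
  have h1 : P * (1 - ContinuousLinearMap.adjoint Q)
      = (P * (1 - Q)) * (2 * P - 1) := by
    rw [hPQ, ← sub_eq_zero]
    have key : P * (1 - (2*P-1)*Q*(2*P-1)) - (P * (1 - Q)) * (2*P-1)
        = (2 * (P - P * P)) * (1 + Q * (2*P-1)) := by noncomm_ring
    rw [key, hP0']; simp
  have h2 : (1 - P) * ContinuousLinearMap.adjoint Q
      = ((1 - P) * Q) * (1 - 2 * P) := by
    rw [hPQ, ← sub_eq_zero]
    have key : (1-P) * ((2*P-1)*Q*(2*P-1)) - ((1-P) * Q) * (1 - 2*P)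
        = (2 * (P - P * P)) * (Q * (2*P-1)) := by noncomm_ring
    rw [key, hP0']; simp
  refine ⟨?_, ?_⟩
  · rw [h1, range_mul_invol _ _ he]
  · rw [h2, range_mul_invol _ _ he']
end
end

section
/- Let (P,Q) be a quasi-projection pair of bounded linear operators on a complex Hilbert space H, with T₁ = P(I−Q), T₂ = (I−P)Q, and let V₁, V₂ be bounded operators on H such that T₁ = V₁|T₁| with V₁*V₁ = P_{cl ran(T₁*)} and T₂ = V₂|T₂| with V₂*V₂ = P_{cl ran(T₂*)}. Then the following are equivalent: (i) (V₁+V₂)(T₁+T₂) = (T₁+T₂)(V₁+V₂); (ii) VᵢTⱼ = TᵢVⱼ for all i,j ∈ {1,2}; (iii) |Tᵢ|·|Tⱼ*|² = |Tᵢ|²·|Tⱼ*| for all i,j ∈ {1,2}. -/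
set_option linter.unusedSectionVars false
set_option synthInstance.maxHeartbeats 1000000
set_option maxHeartbeats 2000000

noncomputable section

open ContinuousLinearMap

variable {H : Type*} [NormedAddCommGroup H] [InnerProductSpace ℂ H] [CompleteSpace H]

section helpers
open scoped InnerProductSpace

lemma projCl_apply_mem (A : H →L[ℂ] H) (x : H) :
    projCl A x ∈ (LinearMap.range (A : H →ₗ[ℂ] H)).topologicalClosure := by
  haveI : CompleteSpace ((LinearMap.range (A : H →ₗ[ℂ] H)).topologicalClosure : Submodule ℂ H) :=
    (Submodule.isClosed_topologicalClosure _).completeSpace_coe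
  exact (Submodule.orthogonalProjectionOnto (LinearMap.range (A : H →ₗ[ℂ] H)).topologicalClosure x).2

lemma projCl_apply_of_mem (A : H →L[ℂ] H) {x : H}
    (hx : x ∈ (LinearMap.range (A : H →ₗ[ℂ] H)).topologicalClosure) : projCl A x = x := by
  haveI : CompleteSpace ((LinearMap.range (A : H →ₗ[ℂ] H)).topologicalClosure : Submodule ℂ H) :=
    (Submodule.isClosed_topologicalClosure _).completeSpace_coe
  exact Submodule.starProjection_eq_self_iff.mpr hx

lemma isSelfAdjoint_projCl (A : H →L[ℂ] H) : IsSelfAdjoint (projCl A) := by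
  haveI : CompleteSpace ((LinearMap.range (A : H →ₗ[ℂ] H)).topologicalClosure : Submodule ℂ H) :=
    (Submodule.isClosed_topologicalClosure _).completeSpace_coe
  exact isSelfAdjoint_starProjection _

lemma projCl_idem (A : H →L[ℂ] H) : projCl A * projCl A = projCl A := by
  ext x
  exact projCl_apply_of_mem A (projCl_apply_mem A x)

lemma mul_projCl_eq_zero {W A : H →L[ℂ] H} (h : W * A = 0) : W * projCl A = 0 := by
  ext x
  have hle : (LinearMap.range (A : H →ₗ[ℂ] H)).topologicalClosure ≤ LinearMap.ker (W : H →ₗ[ℂ] H) := by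
    apply Submodule.topologicalClosure_minimal
    · rintro y ⟨z, rfl⟩
      have := congrFun (congrArg DFunLike.coe h) z
      simpa [LinearMap.mem_ker] using this
    · exact ContinuousLinearMap.isClosed_ker W
  have := hle (projCl_apply_mem A x)
  simpa [LinearMap.mem_ker] using this

lemma eq_zero_of_adjoint_mul_self_eq_zero {D : H →L[ℂ] H}
    (h : ContinuousLinearMap.adjoint D * D = 0) : D = 0 := by
  ext x
  rw [ContinuousLinearMap.zero_apply, ← inner_self_eq_zero (𝕜 := ℂ)]
  have h1 : ⟪(ContinuousLinearMap.adjoint D) (D x), x⟫_ℂ = ⟪D x, D x⟫_ℂ :=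
    ContinuousLinearMap.adjoint_inner_left D x (D x)
  have h2 : (ContinuousLinearMap.adjoint D) (D x) = 0 := by
    have := congrFun (congrArg DFunLike.coe h) x
    simpa using this
  rw [← h1, h2, inner_zero_left]

lemma mem_orthogonal_range_adjoint_iff {T : H →L[ℂ] H} {y : H} :
    y ∈ (LinearMap.range (ContinuousLinearMap.adjoint T : H →ₗ[ℂ] H))ᗮ ↔ T y = 0 := by
  rw [Submodule.mem_orthogonal]
  constructor
  · intro h
    have := h (ContinuousLinearMap.adjoint T (T y)) ⟨T y, rfl⟩
    rw [ContinuousLinearMap.adjoint_inner_left] at this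
    exact inner_self_eq_zero.mp this
  · rintro h u ⟨z, rfl⟩
    rw [ContinuousLinearMap.coe_coe, ContinuousLinearMap.adjoint_inner_left, h, inner_zero_right]

lemma projCl_adjoint_apply_eq_zero_iff {T : H →L[ℂ] H} {y : H} :
    projCl (ContinuousLinearMap.adjoint T) y = 0 ↔ T y = 0 := by
  haveI : CompleteSpace ((LinearMap.range (ContinuousLinearMap.adjoint T : H →ₗ[ℂ] H)).topologicalClosure : Submodule ℂ H) :=
    (Submodule.isClosed_topologicalClosure _).completeSpace_coe
  rw [← mem_orthogonal_range_adjoint_iff (T := T)]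
  show (↑(Submodule.orthogonalProjectionOnto _ y) : H) = 0 ↔ _
  rw [ZeroMemClass.coe_eq_zero, Submodule.orthogonalProjectionOnto_eq_zero_iff,
    ← Submodule.orthogonal_orthogonal_eq_closure, Submodule.triorthogonal_eq_orthogonal]

section polar

variable (T V : H →L[ℂ] H)

local notation "adj" => ContinuousLinearMap.adjoint

lemma pol_nonneg : (0 : H →L[ℂ] H) ≤ adj T * T := by
  rw [← ContinuousLinearMap.star_eq_adjoint]
  exact star_mul_self_nonneg T

lemma pol_S_nonneg : (0 : H →L[ℂ] H) ≤ CFC.sqrt (adj T * T) := CFC.sqrt_nonneg _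

lemma pol_S_sa : IsSelfAdjoint (CFC.sqrt (adj T * T)) :=
  IsSelfAdjoint.of_nonneg (CFC.sqrt_nonneg _)

lemma pol_SS : CFC.sqrt (adj T * T) * CFC.sqrt (adj T * T) = adj T * T :=
  CFC.sqrt_mul_sqrt_self _ (pol_nonneg T)

lemma pol_S_ker_of {y : H} (h : T y = 0) : CFC.sqrt (adj T * T) y = 0 := by
  rw [← inner_self_eq_zero (𝕜 := ℂ)]
  have h1 : ⟪(adj (CFC.sqrt (adj T * T))) (CFC.sqrt (adj T * T) y), y⟫_ℂ
      = ⟪CFC.sqrt (adj T * T) y, CFC.sqrt (adj T * T) y⟫_ℂ :=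
    ContinuousLinearMap.adjoint_inner_left _ y _
  have hsa : adj (CFC.sqrt (adj T * T)) = CFC.sqrt (adj T * T) := by
    rw [← ContinuousLinearMap.star_eq_adjoint]; exact (pol_S_sa T).star_eq
  rw [hsa] at h1
  have h2 : CFC.sqrt (adj T * T) (CFC.sqrt (adj T * T) y) = 0 := by
    have h3 : CFC.sqrt (adj T * T) (CFC.sqrt (adj T * T) y)
        = (CFC.sqrt (adj T * T) * CFC.sqrt (adj T * T)) y := rfl
    rw [h3, pol_SS T]
    show (adj T) (T y) = 0
    rw [h, map_zero]
  rw [← h1, h2, inner_zero_left]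

lemma pol_FS : projCl (adj T) * CFC.sqrt (adj T * T) = CFC.sqrt (adj T * T) := by
  ext x
  show projCl (adj T) (CFC.sqrt (adj T * T) x) = CFC.sqrt (adj T * T) x
  apply projCl_apply_of_mem
  rw [← Submodule.orthogonal_orthogonal_eq_closure]
  rw [Submodule.mem_orthogonal]
  intro y hy
  have hTy : T y = 0 := mem_orthogonal_range_adjoint_iff.mp hy
  have hSy : CFC.sqrt (adj T * T) y = 0 := pol_S_ker_of T hTy
  have hsa : adj (CFC.sqrt (adj T * T)) = CFC.sqrt (adj T * T) := by
    rw [← ContinuousLinearMap.star_eq_adjoint]; exact (pol_S_sa T).star_eq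
  have h1 : ⟪(adj (CFC.sqrt (adj T * T))) y, x⟫_ℂ = ⟪y, CFC.sqrt (adj T * T) x⟫_ℂ :=
    ContinuousLinearMap.adjoint_inner_left _ x y
  rw [hsa, hSy, inner_zero_left] at h1
  exact h1.symm

lemma pol_SF : CFC.sqrt (adj T * T) * projCl (adj T) = CFC.sqrt (adj T * T) := by
  have h := congrArg star (pol_FS T)
  rw [star_mul, (pol_S_sa T).star_eq, (isSelfAdjoint_projCl (adj T)).star_eq] at h
  exact h

variable {T V}

lemma pol_ker_iff (hv : T = V * CFC.sqrt (adj T * T)) (y : H) :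
    CFC.sqrt (adj T * T) y = 0 ↔ T y = 0 := by
  constructor
  · intro h
    conv_lhs => rw [hv]
    show V (CFC.sqrt (adj T * T) y) = 0
    rw [h, map_zero]
  · exact pol_S_ker_of T

lemma pol_kerFS (hv : T = V * CFC.sqrt (adj T * T)) (y : H) :
    CFC.sqrt (adj T * T) y = 0 ↔ projCl (adj T) y = 0 := by
  rw [pol_ker_iff hv, ← projCl_adjoint_apply_eq_zero_iff]

lemma pol_leftkill (hv : T = V * CFC.sqrt (adj T * T)) (Y : H →L[ℂ] H) :
    CFC.sqrt (adj T * T) * Y = 0 ↔ projCl (adj T) * Y = 0 := by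
  constructor <;> intro h <;> ext x
  · exact (pol_kerFS hv (Y x)).mp (congrFun (congrArg DFunLike.coe h) x)
  · exact (pol_kerFS hv (Y x)).mpr (congrFun (congrArg DFunLike.coe h) x)

lemma pol_VF (hvp : adj V * V = projCl (adj T)) : V * projCl (adj T) = V := by
  have hvp' : star V * V = projCl (adj T) := by
    rw [ContinuousLinearMap.star_eq_adjoint]; exact hvp
  have hFF : projCl (adj T) * projCl (adj T) = projCl (adj T) := projCl_idem _
  have h1F : (1 - projCl (adj T)) * projCl (adj T) = 0 := by
    rw [sub_mul, one_mul, hFF, sub_self]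
  have hD : V * (1 - projCl (adj T)) = 0 := by
    apply eq_zero_of_adjoint_mul_self_eq_zero
    rw [← ContinuousLinearMap.star_eq_adjoint]
    calc star (V * (1 - projCl (adj T))) * (V * (1 - projCl (adj T)))
        = star (1 - projCl (adj T)) * ((star V * V) * (1 - projCl (adj T))) := by
          rw [star_mul]; noncomm_ring
      _ = star (1 - projCl (adj T)) * (projCl (adj T) * (1 - projCl (adj T))) := by rw [hvp']
      _ = (1 - projCl (adj T)) * (projCl (adj T) * (1 - projCl (adj T))) := by
          rw [star_sub, star_one, (isSelfAdjoint_projCl (adj T)).star_eq]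
      _ = ((1 - projCl (adj T)) * projCl (adj T)) * (1 - projCl (adj T)) := by noncomm_ring
      _ = 0 := by rw [h1F, zero_mul]
  have h2 : V * 1 - V * projCl (adj T) = 0 := by rw [← mul_sub]; exact hD
  rw [mul_one, sub_eq_zero] at h2
  exact h2.symm

lemma pol_VstarT (hv : T = V * CFC.sqrt (adj T * T))
    (hvp : adj V * V = projCl (adj T)) : adj V * T = CFC.sqrt (adj T * T) := by
  conv_lhs => rw [hv]
  rw [← mul_assoc, hvp, pol_FS]

lemma pol_adjT (hv : T = V * CFC.sqrt (adj T * T)) :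
    adj T = CFC.sqrt (adj T * T) * adj V := by
  conv_lhs => rw [hv]
  rw [← ContinuousLinearMap.star_eq_adjoint (V * CFC.sqrt (adj T * T)), star_mul,
    (pol_S_sa T).star_eq, ContinuousLinearMap.star_eq_adjoint]

lemma pol_R (hv : T = V * CFC.sqrt (adj T * T))
    (hvp : adj V * V = projCl (adj T)) :
    CFC.sqrt (T * adj T) = V * CFC.sqrt (adj T * T) * adj V := by
  have hb : (V * CFC.sqrt (adj T * T) * adj V) * (V * CFC.sqrt (adj T * T) * adj V)
      = T * adj T := by
    calc (V * CFC.sqrt (adj T * T) * adj V) * (V * CFC.sqrt (adj T * T) * adj V)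
        = V * CFC.sqrt (adj T * T) * ((adj V * V) * (CFC.sqrt (adj T * T) * adj V)) := by
          noncomm_ring
      _ = V * CFC.sqrt (adj T * T) * ((projCl (adj T) * CFC.sqrt (adj T * T)) * adj V) := by
          rw [hvp]; noncomm_ring
      _ = V * CFC.sqrt (adj T * T) * (CFC.sqrt (adj T * T) * adj V) := by rw [pol_FS T]
      _ = (V * CFC.sqrt (adj T * T)) * (CFC.sqrt (adj T * T) * adj V) := by noncomm_ring
      _ = T * adj T := by rw [← hv, ← pol_adjT hv]
  have hpos : (0 : H →L[ℂ] H) ≤ V * CFC.sqrt (adj T * T) * adj V := by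
    have h2 : star (CFC.sqrt (CFC.sqrt (adj T * T)) * star V)
          * (CFC.sqrt (CFC.sqrt (adj T * T)) * star V)
        = V * CFC.sqrt (adj T * T) * adj V := by
      rw [star_mul, star_star,
        (IsSelfAdjoint.of_nonneg (CFC.sqrt_nonneg (a := CFC.sqrt (adj T * T)))).star_eq,
        ContinuousLinearMap.star_eq_adjoint]
      calc V * CFC.sqrt (CFC.sqrt (adj T * T)) * (CFC.sqrt (CFC.sqrt (adj T * T)) * adj V)
          = V * (CFC.sqrt (CFC.sqrt (adj T * T)) * CFC.sqrt (CFC.sqrt (adj T * T))) * adj V := by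
            noncomm_ring
        _ = V * CFC.sqrt (adj T * T) * adj V := by
            rw [CFC.sqrt_mul_sqrt_self _ (pol_S_nonneg T)]
    rw [← h2]
    exact star_mul_self_nonneg _
  exact CFC.sqrt_unique hb hpos

lemma pol_VadjT (hv : T = V * CFC.sqrt (adj T * T))
    (hvp : adj V * V = projCl (adj T)) : V * adj T = CFC.sqrt (T * adj T) := by
  rw [pol_R hv hvp]
  conv_lhs => rw [pol_adjT hv]
  rw [← mul_assoc]

lemma pol_TadjV (hv : T = V * CFC.sqrt (adj T * T))
    (hvp : adj V * V = projCl (adj T)) : T * adj V = CFC.sqrt (T * adj T) := by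
  rw [pol_R hv hvp]
  conv_lhs => rw [hv]

lemma pol_RV (hv : T = V * CFC.sqrt (adj T * T))
    (hvp : adj V * V = projCl (adj T)) : CFC.sqrt (T * adj T) * V = T := by
  rw [pol_R hv hvp]
  calc V * CFC.sqrt (adj T * T) * adj V * V
      = V * (CFC.sqrt (adj T * T) * (adj V * V)) := by noncomm_ring
    _ = V * (CFC.sqrt (adj T * T) * projCl (adj T)) := by rw [hvp]
    _ = V * CFC.sqrt (adj T * T) := by rw [pol_SF T]
    _ = T := hv.symm

lemma pol_rightkill (hv : T = V * CFC.sqrt (adj T * T))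
    (hvp : adj V * V = projCl (adj T)) (X : H →L[ℂ] H) :
    X * CFC.sqrt (T * adj T) = 0 ↔ X * V = 0 := by
  constructor
  · intro h
    have hT0 : X * T = 0 := by
      rw [← pol_RV hv hvp, ← mul_assoc, h, zero_mul]
    have h1 : (X * V) * CFC.sqrt (adj T * T) = 0 := by
      rw [mul_assoc, ← hv]; exact hT0
    have h2 : CFC.sqrt (adj T * T) * star (X * V) = 0 := by
      have h2' := congrArg star h1
      rw [star_mul, (pol_S_sa T).star_eq, star_zero] at h2'
      exact h2'
    have h3 : projCl (adj T) * star (X * V) = 0 := (pol_leftkill hv _).mp h2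
    have h4 : (X * V) * projCl (adj T) = 0 := by
      have h4' := congrArg star h3
      rw [star_mul, star_star, (isSelfAdjoint_projCl (adj T)).star_eq, star_zero] at h4'
      exact h4'
    rw [← pol_VF hvp, ← mul_assoc]
    exact h4
  · intro h
    rw [← pol_VadjT hv hvp, ← mul_assoc, h, zero_mul]

end polar

lemma pol_pair_aux {Si Fi Rj Vj Ti Tj Vi Wi : H →L[ℂ] H}
    (hFS : Fi * Si = Si)
    (hlk : ∀ Y : H →L[ℂ] H, Si * Y = 0 ↔ Fi * Y = 0)
    (hrk : ∀ X : H →L[ℂ] H, X * Rj = 0 ↔ X * Vj = 0)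
    (hRV : Rj * Vj = Tj) (hVS : Vi * Si = Ti) (hVF : Vi * Fi = Vi)
    (hWT : Wi * Ti = Si) (hWV : Wi * Vi = Fi) :
    Vi * Tj = Ti * Vj ↔ Si * Rj ^ 2 = Si ^ 2 * Rj := by
  have e : Si * (Rj * Rj - Si * Rj) = Si * Rj ^ 2 - Si ^ 2 * Rj := by
    rw [pow_two, pow_two]; noncomm_ring
  have h1 : (Si * Rj ^ 2 = Si ^ 2 * Rj) ↔ Si * (Rj * Rj - Si * Rj) = 0 := by
    rw [e, sub_eq_zero]
  have e2 : Fi * (Rj * Rj - Si * Rj) = (Fi * Rj - Si) * Rj := by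
    calc Fi * (Rj * Rj - Si * Rj) = (Fi * Rj) * Rj - (Fi * Si) * Rj := by noncomm_ring
      _ = (Fi * Rj) * Rj - Si * Rj := by rw [hFS]
      _ = (Fi * Rj - Si) * Rj := by noncomm_ring
  have e3 : (Fi * Rj - Si) * Vj = Fi * Tj - Si * Vj := by
    rw [← hRV]; noncomm_ring
  constructor
  · intro hii
    rw [h1, hlk, e2, hrk, e3, sub_eq_zero]
    calc Fi * Tj = (Wi * Vi) * Tj := by rw [hWV]
      _ = Wi * (Ti * Vj) := by rw [mul_assoc, hii]
      _ = Si * Vj := by rw [← mul_assoc, hWT]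
  · intro hiii
    rw [h1, hlk, e2, hrk, e3, sub_eq_zero] at hiii
    calc Vi * Tj = Vi * (Fi * Tj) := by
          rw [← mul_assoc, hVF]
      _ = Vi * (Si * Vj) := by rw [hiii]
      _ = Ti * Vj := by rw [← mul_assoc, hVS]

lemma pol_pair {Ti Vi Tj Vj : H →L[ℂ] H}
    (hvi : Ti = Vi * CFC.sqrt (ContinuousLinearMap.adjoint Ti * Ti))
    (hvpi : ContinuousLinearMap.adjoint Vi * Vi = projCl (ContinuousLinearMap.adjoint Ti))
    (hvj : Tj = Vj * CFC.sqrt (ContinuousLinearMap.adjoint Tj * Tj))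
    (hvpj : ContinuousLinearMap.adjoint Vj * Vj = projCl (ContinuousLinearMap.adjoint Tj)) :
    Vi * Tj = Ti * Vj ↔
      CFC.sqrt (ContinuousLinearMap.adjoint Ti * Ti)
          * CFC.sqrt (Tj * ContinuousLinearMap.adjoint Tj) ^ 2
        = CFC.sqrt (ContinuousLinearMap.adjoint Ti * Ti) ^ 2
          * CFC.sqrt (Tj * ContinuousLinearMap.adjoint Tj) := by
  exact pol_pair_aux (pol_FS Ti) (pol_leftkill hvi) (pol_rightkill hvj hvpj)
    (pol_RV hvj hvpj) hvi.symm (pol_VF hvpi) (pol_VstarT hvi hvpi) hvpi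

end helpers

/-- For a semi-harmonious quasi-projection pair `(P, Q)` with polar decompositions
`Tᵢ = Vᵢ|Tᵢ|`, the following are equivalent:
(i) `(V₁+V₂)(T₁+T₂) = (T₁+T₂)(V₁+V₂)`; (ii) `VᵢTⱼ = TᵢVⱼ` for all `i, j`;
(iii) `|Tᵢ||Tⱼ*|² = |Tᵢ|²|Tⱼ*|` for all `i, j`. -/
theorem quasiProjectionPair_polar_commutation_tfae (P Q : H →L[ℂ] H)
    (hPsa : ContinuousLinearMap.adjoint P = P) (hP : P * P = P) (hQ : Q * Q = Q)
    (hPQ : ContinuousLinearMap.adjoint Q = (2 * P - 1) * Q * (2 * P - 1))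
    (T₁ T₂ : H →L[ℂ] H) (hT₁ : T₁ = P * (1 - Q)) (hT₂ : T₂ = (1 - P) * Q)
    (V₁ V₂ : H →L[ℂ] H)
    (hV₁ : T₁ = V₁ * CFC.sqrt (ContinuousLinearMap.adjoint T₁ * T₁))
    (hV₁p : ContinuousLinearMap.adjoint V₁ * V₁ = projCl (ContinuousLinearMap.adjoint T₁))
    (hV₂ : T₂ = V₂ * CFC.sqrt (ContinuousLinearMap.adjoint T₂ * T₂))
    (hV₂p : ContinuousLinearMap.adjoint V₂ * V₂ = projCl (ContinuousLinearMap.adjoint T₂)) :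
    ((V₁ + V₂) * (T₁ + T₂) = (T₁ + T₂) * (V₁ + V₂) ↔
      (V₁ * T₁ = T₁ * V₁ ∧ V₁ * T₂ = T₁ * V₂ ∧
        V₂ * T₁ = T₂ * V₁ ∧ V₂ * T₂ = T₂ * V₂)) ∧
    ((V₁ * T₁ = T₁ * V₁ ∧ V₁ * T₂ = T₁ * V₂ ∧
        V₂ * T₁ = T₂ * V₁ ∧ V₂ * T₂ = T₂ * V₂) ↔
      (∀ S T : H →L[ℂ] H, (S = T₁ ∨ S = T₂) → (T = T₁ ∨ T = T₂) →
        CFC.sqrt (ContinuousLinearMap.adjoint S * S)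
            * (CFC.sqrt (T * ContinuousLinearMap.adjoint T)) ^ 2 =
          (CFC.sqrt (ContinuousLinearMap.adjoint S * S)) ^ 2
            * CFC.sqrt (T * ContinuousLinearMap.adjoint T))) := by
    -- basic algebraic identities
  have hPT₁ : P * T₁ = T₁ := by rw [hT₁, ← mul_assoc, hP]
  have hPT₂ : P * T₂ = 0 := by
    rw [hT₂, ← mul_assoc]
    have h0 : P * (1 - P) = 0 := by rw [mul_sub, mul_one, hP, sub_self]
    rw [h0, zero_mul]
  have h1PT₁ : (1 - P) * T₁ = 0 := by rw [sub_mul, one_mul, hPT₁, sub_self]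
  have h1PT₂ : (1 - P) * T₂ = T₂ := by rw [sub_mul, one_mul, hPT₂, sub_zero]
  have hT₁Q : T₁ * Q = 0 := by
    rw [hT₁, mul_assoc]
    have h0 : (1 - Q) * Q = 0 := by rw [sub_mul, one_mul, hQ, sub_self]
    rw [h0, mul_zero]
  have hT₁1Q : T₁ * (1 - Q) = T₁ := by rw [mul_sub, mul_one, hT₁Q, sub_zero]
  have hT₂Q : T₂ * Q = T₂ := by rw [hT₂, mul_assoc, hQ]
  have hT₂1Q : T₂ * (1 - Q) = 0 := by rw [mul_sub, mul_one, hT₂Q, sub_self]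
  -- adjoint identities
  have hQs : ContinuousLinearMap.adjoint Q * ContinuousLinearMap.adjoint Q
      = ContinuousLinearMap.adjoint Q := by
    rw [← ContinuousLinearMap.star_eq_adjoint, ← star_mul, hQ]
  have hadjT₁ : ContinuousLinearMap.adjoint T₁
      = (1 - ContinuousLinearMap.adjoint Q) * P := by
    rw [hT₁, ← ContinuousLinearMap.star_eq_adjoint, star_mul, star_sub, star_one]
    simp only [ContinuousLinearMap.star_eq_adjoint]
    rw [hPsa]
  have hadjT₂ : ContinuousLinearMap.adjoint T₂
      = ContinuousLinearMap.adjoint Q * (1 - P) := by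
    rw [hT₂, ← ContinuousLinearMap.star_eq_adjoint, star_mul, star_sub, star_one]
    simp only [ContinuousLinearMap.star_eq_adjoint]
    rw [hPsa]
  have hQsT₁s : ContinuousLinearMap.adjoint Q * ContinuousLinearMap.adjoint T₁ = 0 := by
    rw [hadjT₁, ← mul_assoc]
    have h0 : ContinuousLinearMap.adjoint Q * (1 - ContinuousLinearMap.adjoint Q) = 0 := by
      rw [mul_sub, mul_one, hQs, sub_self]
    rw [h0, zero_mul]
  have h1QsT₂s : (1 - ContinuousLinearMap.adjoint Q) * ContinuousLinearMap.adjoint T₂ = 0 := by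
    rw [hadjT₂, ← mul_assoc]
    have h0 : (1 - ContinuousLinearMap.adjoint Q) * ContinuousLinearMap.adjoint Q = 0 := by
      rw [sub_mul, one_mul, hQs, sub_self]
    rw [h0, zero_mul]
  -- projection identities for V₁, V₂
  have h1PV₁ : (1 - P) * V₁ = 0 := by
    have h0 : ((1 - P) * V₁) * ContinuousLinearMap.adjoint T₁ = 0 := by
      rw [mul_assoc, pol_VadjT hV₁ hV₁p, ← pol_TadjV hV₁ hV₁p, ← mul_assoc, h1PT₁, zero_mul]
    have h1 := mul_projCl_eq_zero h0
    rw [← pol_VF hV₁p, ← mul_assoc]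
    exact h1
  have hPV₁ : P * V₁ = V₁ := by
    rw [sub_mul, one_mul, sub_eq_zero] at h1PV₁
    exact h1PV₁.symm
  have hPV₂ : P * V₂ = 0 := by
    have h0 : (P * V₂) * ContinuousLinearMap.adjoint T₂ = 0 := by
      rw [mul_assoc, pol_VadjT hV₂ hV₂p, ← pol_TadjV hV₂ hV₂p, ← mul_assoc, hPT₂, zero_mul]
    have h1 := mul_projCl_eq_zero h0
    rw [← pol_VF hV₂p, ← mul_assoc]
    exact h1
  have h1PV₂ : (1 - P) * V₂ = V₂ := by rw [sub_mul, one_mul, hPV₂, sub_zero]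
  have hV₁Q : V₁ * Q = 0 := by
    have h1 : ContinuousLinearMap.adjoint Q * projCl (ContinuousLinearMap.adjoint T₁) = 0 :=
      mul_projCl_eq_zero hQsT₁s
    have h2 : projCl (ContinuousLinearMap.adjoint T₁) * Q = 0 := by
      have h3 := congrArg star h1
      rw [star_mul, (isSelfAdjoint_projCl (ContinuousLinearMap.adjoint T₁)).star_eq,
        ← ContinuousLinearMap.star_eq_adjoint Q, star_star, star_zero] at h3
      exact h3
    rw [← pol_VF hV₁p, mul_assoc, h2, mul_zero]
  have hV₁1Q : V₁ * (1 - Q) = V₁ := by rw [mul_sub, mul_one, hV₁Q, sub_zero]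
  have hV₂1Q : V₂ * (1 - Q) = 0 := by
    have h1 : (1 - ContinuousLinearMap.adjoint Q) * projCl (ContinuousLinearMap.adjoint T₂) = 0 :=
      mul_projCl_eq_zero h1QsT₂s
    have h2 : projCl (ContinuousLinearMap.adjoint T₂) * (1 - Q) = 0 := by
      have h3 := congrArg star h1
      rw [star_mul, (isSelfAdjoint_projCl (ContinuousLinearMap.adjoint T₂)).star_eq,
        star_sub, star_one, ← ContinuousLinearMap.star_eq_adjoint Q, star_star, star_zero] at h3
      exact h3
    rw [← pol_VF hV₂p, mul_assoc, h2, mul_zero]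
  have hV₂Q : V₂ * Q = V₂ := by
    rw [mul_sub, mul_one, sub_eq_zero] at hV₂1Q
    exact hV₂1Q.symm
  have hV₂1Q' : V₂ * (1 - Q) = 0 := by rw [mul_sub, mul_one, hV₂Q, sub_self]
  constructor
  · constructor
    · intro h
      have hA : V₁ * T₁ + V₁ * T₂ = T₁ * V₁ + T₁ * V₂ := by
        have e1 : P * ((V₁ + V₂) * (T₁ + T₂)) = V₁ * T₁ + V₁ * T₂ := by
          rw [← mul_assoc, mul_add P V₁ V₂, hPV₁, hPV₂, add_zero, mul_add]
        have e2 : P * ((T₁ + T₂) * (V₁ + V₂)) = T₁ * V₁ + T₁ * V₂ := by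
          rw [← mul_assoc, mul_add P T₁ T₂, hPT₁, hPT₂, add_zero, mul_add]
        rw [← e1, h, e2]
      have hB : V₂ * T₁ + V₂ * T₂ = T₂ * V₁ + T₂ * V₂ := by
        have e1 : (1 - P) * ((V₁ + V₂) * (T₁ + T₂)) = V₂ * T₁ + V₂ * T₂ := by
          rw [← mul_assoc, mul_add (1 - P) V₁ V₂, h1PV₁, h1PV₂, zero_add, mul_add]
        have e2 : (1 - P) * ((T₁ + T₂) * (V₁ + V₂)) = T₂ * V₁ + T₂ * V₂ := by
          rw [← mul_assoc, mul_add (1 - P) T₁ T₂, h1PT₁, h1PT₂, zero_add, mul_add]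
        rw [← e1, h, e2]
      have c11 : V₁ * T₁ = T₁ * V₁ := by
        have h5 := congrArg (fun X => X * (1 - Q)) hA
        simp only [add_mul, mul_assoc] at h5
        rw [hT₁1Q, hT₂1Q, hV₁1Q, hV₂1Q', mul_zero, mul_zero, add_zero, add_zero] at h5
        exact h5
      have c12 : V₁ * T₂ = T₁ * V₂ := by
        have h5 := congrArg (fun X => X * Q) hA
        simp only [add_mul, mul_assoc] at h5
        rw [hT₁Q, hT₂Q, hV₁Q, hV₂Q, mul_zero, mul_zero, zero_add, zero_add] at h5
        exact h5
      have c21 : V₂ * T₁ = T₂ * V₁ := by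
        have h5 := congrArg (fun X => X * (1 - Q)) hB
        simp only [add_mul, mul_assoc] at h5
        rw [hT₁1Q, hT₂1Q, hV₁1Q, hV₂1Q', mul_zero, mul_zero, add_zero, add_zero] at h5
        exact h5
      have c22 : V₂ * T₂ = T₂ * V₂ := by
        have h5 := congrArg (fun X => X * Q) hB
        simp only [add_mul, mul_assoc] at h5
        rw [hT₁Q, hT₂Q, hV₁Q, hV₂Q, mul_zero, mul_zero, zero_add, zero_add] at h5
        exact h5
      exact ⟨c11, c12, c21, c22⟩
    · rintro ⟨h11, h12, h21, h22⟩
      simp only [add_mul, mul_add]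
      rw [h11, h12, h21, h22]
  · constructor
    · rintro ⟨h11, h12, h21, h22⟩ S T hS hT
      rcases hS with rfl | rfl <;> rcases hT with rfl | rfl
      · exact (pol_pair hV₁ hV₁p hV₁ hV₁p).mp h11
      · exact (pol_pair hV₁ hV₁p hV₂ hV₂p).mp h12
      · exact (pol_pair hV₂ hV₂p hV₁ hV₁p).mp h21
      · exact (pol_pair hV₂ hV₂p hV₂ hV₂p).mp h22
    · intro h
      exact ⟨(pol_pair hV₁ hV₁p hV₁ hV₁p).mpr (h T₁ T₁ (Or.inl rfl) (Or.inl rfl)),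
        (pol_pair hV₁ hV₁p hV₂ hV₂p).mpr (h T₁ T₂ (Or.inl rfl) (Or.inr rfl)),
        (pol_pair hV₂ hV₂p hV₁ hV₁p).mpr (h T₂ T₁ (Or.inr rfl) (Or.inl rfl)),
        (pol_pair hV₂ hV₂p hV₂ hV₂p).mpr (h T₂ T₂ (Or.inr rfl) (Or.inr rfl))⟩
end
end
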